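/- arXiv:2103.04029 — 7 statements merged into one kernel-verified Lean document; each statement's English description precedes it below -/
import Mathlib

section
/- Let (X, ξ) be a pointed coarse space and let s and t be coarse sequences in (X, ξ). If s ≡σ t, then s ≡ε t. Consequently the map sending the σ-equivalence class of a coarse sequence s to its ε-equivalence class is a well-defined surjection from σ(X,ξ) onto ε(X,ξ). -/
/-- A coarse structure on a set `X`: a collection of "controlled" subsets of `X × X`
containing the diagonal, closed under subsets, finite unions, composition and inverse. -/
structure CoarseStructure (X : Type*) where
  controlled : Set (Set (X × X))
  diagonal_mem : {p : X × X | p.1 = p.2} ∈ controlled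
  mem_of_subset : ∀ E F : Set (X × X), E ∈ controlled → F ⊆ E → F ∈ controlled
  union_mem : ∀ E F : Set (X × X), E ∈ controlled → F ∈ controlled → E ∪ F ∈ controlled
  comp_mem : ∀ E F : Set (X × X), E ∈ controlled → F ∈ controlled →
    {p : X × X | ∃ z, (p.1, z) ∈ E ∧ (z, p.2) ∈ F} ∈ controlled
  inv_mem : ∀ E : Set (X × X), E ∈ controlled → {p : X × X | (p.2, p.1) ∈ E} ∈ controlled

/-- A subset `B` of a coarse space is bounded if `B × B` is controlled. -/
def CoarseStructure.IsBoundedSet {X : Type*} (C : CoarseStructure X) (B : Set X) : Prop :=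
  B ×ˢ B ∈ C.controlled

/-- A coarse sequence in a pointed coarse space `(X, ξ)`: a proper and bornologous
map `ℕ → X`. -/
def IsCoarseSeq {X : Type*} (C : CoarseStructure X) (ξ : X) (s : ℕ → X) : Prop :=
  (∀ B : Set X, C.IsBoundedSet B → ξ ∈ B → ∃ N : ℕ, ∀ i ≥ N, s i ∉ B) ∧
  (∃ E ∈ C.controlled, ∀ i : ℕ, (s i, s (i + 1)) ∈ E)

/-- `s` is a subsequence of `t`. -/
def IsSubseq {X : Type*} (s t : ℕ → X) : Prop :=
  ∃ k : ℕ → ℕ, StrictMono k ∧ ∀ i, s i = t (k i)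

/-- σ-equivalence: `s` and `t` are connected by a finite chain of coarse sequences
in which each consecutive pair is related by the subsequence relation. -/
def SigmaRel {X : Type*} (C : CoarseStructure X) (ξ : X) (s t : ℕ → X) : Prop :=
  ∃ (n : ℕ) (u : ℕ → ℕ → X), u 0 = s ∧ u n = t ∧ (∀ i ≤ n, IsCoarseSeq C ξ (u i)) ∧
    ∀ i < n, IsSubseq (u i) (u (i + 1)) ∨ IsSubseq (u (i + 1)) (u i)

/-- `x` and `y` are connected by an `E`-chain inside `A`. -/
def Chain {X : Type*} (E : Set (X × X)) (A : Set X) (x y : X) : Prop :=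
  ∃ (n : ℕ) (c : ℕ → X), c 0 = x ∧ c n = y ∧ (∀ i ≤ n, c i ∈ A) ∧
    ∀ i < n, (c i, c (i + 1)) ∈ E

/-- ε-equivalence: there is a controlled set `E` such that for every bounded set
`B ∋ ξ` there is `N` with the tails `{s i : i ≥ N}` and `{t i : i ≥ N}` lying in
the same `E`-connected component of `X \ B`. -/
def EpsRel {X : Type*} (C : CoarseStructure X) (ξ : X) (s t : ℕ → X) : Prop :=
  ∃ E ∈ C.controlled, ∀ B : Set X, C.IsBoundedSet B → ξ ∈ B → ∃ N : ℕ,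
    ∀ x ∈ (s '' {i | N ≤ i}) ∪ (t '' {i | N ≤ i}),
    ∀ y ∈ (s '' {i | N ≤ i}) ∪ (t '' {i | N ≤ i}),
      Chain E Bᶜ x y

/-- The set of coarse sequences in `(X, ξ)`. -/
def CoarseSeq {X : Type*} (C : CoarseStructure X) (ξ : X) :=
  {s : ℕ → X // IsCoarseSeq C ξ s}

/-- `σ(X, ξ)`: the quotient of the set of coarse sequences by σ-equivalence. -/
def SigmaQuot {X : Type*} (C : CoarseStructure X) (ξ : X) :=
  Quot (fun s t : CoarseSeq C ξ => SigmaRel C ξ s.1 t.1)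

/-- `ε(X, ξ)`: the quotient of the set of coarse sequences by ε-equivalence. -/
def EpsQuot {X : Type*} (C : CoarseStructure X) (ξ : X) :=
  Quot (fun s t : CoarseSeq C ξ => EpsRel C ξ s.1 t.1)

/-- A map between coarse spaces is proper if preimages of bounded sets are bounded. -/
def IsProperMapC {X Y : Type*} (CX : CoarseStructure X) (CY : CoarseStructure Y)
    (f : X → Y) : Prop :=
  ∀ B : Set Y, CY.IsBoundedSet B → CX.IsBoundedSet (f ⁻¹' B)

/-- A map between coarse spaces is bornologous if images of controlled sets are controlled. -/
def IsBornologous {X Y : Type*} (CX : CoarseStructure X) (CY : CoarseStructure Y)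
    (f : X → Y) : Prop :=
  ∀ E ∈ CX.controlled, (fun p : X × X => (f p.1, f p.2)) '' E ∈ CY.controlled

/-- A coarse map is a map that is both bornologous and proper. -/
def IsCoarseMap {X Y : Type*} (CX : CoarseStructure X) (CY : CoarseStructure Y)
    (f : X → Y) : Prop :=
  IsBornologous CX CY f ∧ IsProperMapC CX CY f

/-- Two maps are close if `{(f x, g x) : x ∈ X}` is controlled. -/
def IsClose {X Y : Type*} (CY : CoarseStructure Y) (f g : X → Y) : Prop :=
  Set.range (fun x : X => (f x, g x)) ∈ CY.controlled

section Aux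

variable {X : Type*}

lemma chain_mono {E F : Set (X × X)} {A : Set X} {x y : X} (hEF : E ⊆ F)
    (h : Chain E A x y) : Chain F A x y := by
  obtain ⟨n, c, h0, hn, hmem, hstep⟩ := h
  exact ⟨n, c, h0, hn, hmem, fun i hi => hEF (hstep i hi)⟩

lemma chain_trans {E : Set (X × X)} {A : Set X} {x y z : X}
    (h1 : Chain E A x y) (h2 : Chain E A y z) : Chain E A x z := by
  obtain ⟨n, c, hc0, hcn, hcmem, hcstep⟩ := h1
  obtain ⟨m, d, hd0, hdm, hdmem, hdstep⟩ := h2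
  refine ⟨n + m, fun i => if i ≤ n then c i else d (i - n), ?_, ?_, ?_, ?_⟩
  · simp [hc0]
  · by_cases hm : m = 0
    · subst hm; simp [hcn, hd0.symm ▸ hdm]
    · have : ¬ (n + m ≤ n) := by omega
      simp only [this, if_false]
      have : n + m - n = m := by omega
      rw [this, hdm]
  · intro i hi
    by_cases h : i ≤ n
    · simp only [h, if_true]; exact hcmem i h
    · simp only [h, if_false]; exact hdmem (i - n) (by omega)
  · intro i hi
    rcases lt_trichotomy i n with h | h | h
    · have h1' : i ≤ n := le_of_lt h
      have h2' : i + 1 ≤ n := h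
      simp only [h1', h2', if_true]
      exact hcstep i h
    · subst h
      have : ¬ (i + 1 ≤ i) := by omega
      simp only [le_refl, if_true, this, if_false]
      have : i + 1 - i = 1 := by omega
      rw [this, hcn, ← hd0]
      exact hdstep 0 (by omega)
    · have h1' : ¬ (i ≤ n) := by omega
      have h2' : ¬ (i + 1 ≤ n) := by omega
      simp only [h1', h2', if_false]
      have : i + 1 - n = (i - n) + 1 := by omega
      rw [this]
      exact hdstep (i - n) (by omega)

lemma chain_up {E : Set (X × X)} {B : Set X} {t : ℕ → X} {N a b : ℕ}
    (hmem : ∀ i, N ≤ i → t i ∉ B) (hstep : ∀ i, (t i, t (i + 1)) ∈ E)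
    (hNa : N ≤ a) (hab : a ≤ b) : Chain E Bᶜ (t a) (t b) := by
  refine ⟨b - a, fun i => t (a + i), by simp, ?_, ?_, ?_⟩
  · show t (a + (b - a)) = t b
    congr 1; omega
  · intro i _; exact hmem (a + i) (by omega)
  · intro i _
    show (t (a + i), t (a + (i + 1))) ∈ E
    have : a + (i + 1) = (a + i) + 1 := by omega
    rw [this]; exact hstep (a + i)

lemma chain_down {E : Set (X × X)} {B : Set X} {t : ℕ → X} {N a b : ℕ}
    (hmem : ∀ i, N ≤ i → t i ∉ B) (hstep : ∀ i, (t i, t (i + 1)) ∈ E)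
    (hNb : N ≤ b) (hba : b ≤ a) :
    Chain {p : X × X | (p.2, p.1) ∈ E} Bᶜ (t a) (t b) := by
  refine ⟨a - b, fun i => t (a - i), by simp, ?_, ?_, ?_⟩
  · show t (a - (a - b)) = t b
    congr 1; omega
  · intro i hi; exact hmem (a - i) (by omega)
  · intro i hi
    show (t (a - i), t (a - (i + 1))) ∈ {p : X × X | (p.2, p.1) ∈ E}
    have h1 : a - (i + 1) + 1 = a - i := by omega
    have := hstep (a - (i + 1))
    rw [h1] at this
    exact this

/-- Subsequence implies ε-equivalence. -/
lemma epsRel_of_subseq {C : CoarseStructure X} {ξ : X} {s t : ℕ → X}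
    (ht : IsCoarseSeq C ξ t) (hsub : IsSubseq s t) : EpsRel C ξ s t := by
  obtain ⟨k, hk, hsk⟩ := hsub
  obtain ⟨hproper, E, hE, hstep⟩ := ht
  refine ⟨E ∪ {p : X × X | (p.2, p.1) ∈ E},
    C.union_mem _ _ hE (C.inv_mem _ hE), ?_⟩
  intro B hB hξB
  obtain ⟨N, hN⟩ := hproper B hB hξB
  refine ⟨N, ?_⟩
  have key : ∀ a b, N ≤ a → N ≤ b →
      Chain (E ∪ {p : X × X | (p.2, p.1) ∈ E}) Bᶜ (t a) (t b) := by
    intro a b ha hb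
    rcases le_total a b with h | h
    · exact chain_mono Set.subset_union_left (chain_up hN hstep ha h)
    · exact chain_mono Set.subset_union_right (chain_down hN hstep hb h)
  have hform : ∀ x ∈ (s '' {i | N ≤ i}) ∪ (t '' {i | N ≤ i}),
      ∃ a, N ≤ a ∧ x = t a := by
    rintro x (⟨i, hi, rfl⟩ | ⟨i, hi, rfl⟩)
    · exact ⟨k i, le_trans hi (hk.le_apply), hsk i⟩
    · exact ⟨i, hi, rfl⟩
  intro x hx y hy
  obtain ⟨a, ha, rfl⟩ := hform x hx
  obtain ⟨b, hb, rfl⟩ := hform y hy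
  exact key a b ha hb

lemma epsRel_symm {C : CoarseStructure X} {ξ : X} {s t : ℕ → X}
    (h : EpsRel C ξ s t) : EpsRel C ξ t s := by
  obtain ⟨E, hE, h⟩ := h
  refine ⟨E, hE, fun B hB hξB => ?_⟩
  obtain ⟨N, hN⟩ := h B hB hξB
  exact ⟨N, fun x hx y hy => hN x (Set.union_comm _ _ ▸ hx) y (Set.union_comm _ _ ▸ hy)⟩

lemma epsRel_trans {C : CoarseStructure X} {ξ : X} {s t u : ℕ → X}
    (h1 : EpsRel C ξ s t) (h2 : EpsRel C ξ t u) : EpsRel C ξ s u := by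
  obtain ⟨E1, hE1, h1⟩ := h1
  obtain ⟨E2, hE2, h2⟩ := h2
  refine ⟨E1 ∪ E2, C.union_mem _ _ hE1 hE2, fun B hB hξB => ?_⟩
  obtain ⟨N1, hN1⟩ := h1 B hB hξB
  obtain ⟨N2, hN2⟩ := h2 B hB hξB
  set N := max N1 N2 with hNdef
  refine ⟨N, ?_⟩
  have htN1 : t N ∈ (s '' {i | N1 ≤ i}) ∪ (t '' {i | N1 ≤ i}) :=
    Or.inr ⟨N, by simp [hNdef], rfl⟩
  have htN2 : t N ∈ (t '' {i | N2 ≤ i}) ∪ (u '' {i | N2 ≤ i}) :=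
    Or.inl ⟨N, by simp [hNdef], rfl⟩
  -- any point of the union has a chain to t N
  have key : ∀ x ∈ (s '' {i | N ≤ i}) ∪ (u '' {i | N ≤ i}),
      Chain (E1 ∪ E2) Bᶜ x (t N) ∧ Chain (E1 ∪ E2) Bᶜ (t N) x := by
    rintro x (⟨i, hi, rfl⟩ | ⟨i, hi, rfl⟩)
    · have hx1 : s i ∈ (s '' {i | N1 ≤ i}) ∪ (t '' {i | N1 ≤ i}) :=
        Or.inl ⟨i, by simp only [Set.mem_setOf_eq] at hi ⊢; omega, rfl⟩
      exact ⟨chain_mono Set.subset_union_left (hN1 _ hx1 _ htN1),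
        chain_mono Set.subset_union_left (hN1 _ htN1 _ hx1)⟩
    · have hx2 : u i ∈ (t '' {i | N2 ≤ i}) ∪ (u '' {i | N2 ≤ i}) :=
        Or.inr ⟨i, by simp only [Set.mem_setOf_eq] at hi ⊢; omega, rfl⟩
      exact ⟨chain_mono Set.subset_union_right (hN2 _ hx2 _ htN2),
        chain_mono Set.subset_union_right (hN2 _ htN2 _ hx2)⟩
  intro x hx y hy
  exact chain_trans (key x hx).1 (key y hy).2

lemma epsRel_refl {C : CoarseStructure X} {ξ : X} {s : ℕ → X}
    (hs : IsCoarseSeq C ξ s) : EpsRel C ξ s s :=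
  epsRel_of_subseq hs ⟨id, strictMono_id, fun _ => rfl⟩

lemma sigmaRel_implies_epsRel {C : CoarseStructure X} {ξ : X} {s t : ℕ → X}
    (_hs : IsCoarseSeq C ξ s) (_ht : IsCoarseSeq C ξ t)
    (h : SigmaRel C ξ s t) : EpsRel C ξ s t := by
  obtain ⟨n, u, h0, hn, hcoarse, hsub⟩ := h
  have key : ∀ m ≤ n, EpsRel C ξ (u 0) (u m) := by
    intro m hm
    induction m with
    | zero => exact epsRel_refl (hcoarse 0 (by omega))
    | succ m ih =>
      refine epsRel_trans (ih (by omega)) ?_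
      rcases hsub m (by omega) with h | h
      · exact epsRel_of_subseq (hcoarse (m + 1) hm) h
      · exact epsRel_symm (epsRel_of_subseq (hcoarse m (by omega)) h)
  have := key n le_rfl
  rwa [h0, hn] at this

end Aux

/-- σ-equivalence implies ε-equivalence, and consequently the map sending
the σ-class of a coarse sequence to its ε-class is a well-defined surjection
`σ(X,ξ) → ε(X,ξ)`. -/
theorem sigmaRel_implies_epsRel_and_surjection {X : Type*} (C : CoarseStructure X) (ξ : X) :
    (∀ s t : ℕ → X, IsCoarseSeq C ξ s → IsCoarseSeq C ξ t →
      SigmaRel C ξ s t → EpsRel C ξ s t) ∧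
    ∃ F : SigmaQuot C ξ → EpsQuot C ξ,
      (∀ s : CoarseSeq C ξ, F (Quot.mk _ s) = Quot.mk _ s) ∧ Function.Surjective F := by
  refine ⟨fun s t hs ht h => sigmaRel_implies_epsRel hs ht h, ?_⟩
  refine ⟨Quot.lift (fun s : CoarseSeq C ξ => (Quot.mk _ s : EpsQuot C ξ))
    (fun a b h => Quot.sound (sigmaRel_implies_epsRel a.2 b.2 h)), fun s => rfl, ?_⟩
  intro q
  induction q using Quot.ind with
  | _ a => exact ⟨Quot.mk _ a, rfl⟩
end

section
/- Let (X, ξ) be a pointed coarse space, let s be a coarse sequence in (X, ξ), and let k : ℕ → ℕ be strictly increasing such that the subsequence s ∘ k is also a coarse sequence. Then s ≡ε (s ∘ k), i.e., every coarse sequence is ε-equivalent to each of its coarse subsequences. -/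
/-- every coarse sequence is ε-equivalent to each of its coarse subsequences. -/
theorem epsRel_subseq {X : Type*} (C : CoarseStructure X) (ξ : X) (s : ℕ → X) (k : ℕ → ℕ)
    (hs : IsCoarseSeq C ξ s) (hk : StrictMono k) (hsk : IsCoarseSeq C ξ (s ∘ k)) :
    EpsRel C ξ s (s ∘ k) := by
  obtain ⟨hproper, E, hE, hEs⟩ := hs
  set E' : Set (X × X) := E ∪ {p : X × X | (p.2, p.1) ∈ E} with hE'def
  refine ⟨E', C.union_mem _ _ hE (C.inv_mem _ hE), ?_⟩
  intro B hB hξB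
  obtain ⟨N, hN⟩ := hproper B hB hξB
  refine ⟨N, ?_⟩
  -- forward chains
  have fwd : ∀ i j : ℕ, N ≤ i → i ≤ j → Chain E' Bᶜ (s i) (s j) := by
    intro i j hNi hij
    refine ⟨j - i, fun m => s (i + m), by simp, by show s (i + (j - i)) = s j; congr 1; omega, ?_, ?_⟩
    · intro m _; exact hN (i + m) (by omega)
    · intro m _; exact Or.inl (hEs (i + m))
  have chain : ∀ i j : ℕ, N ≤ i → N ≤ j → Chain E' Bᶜ (s i) (s j) := by
    intro i j hNi hNj
    rcases le_or_gt i j with h | h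
    · exact fwd i j hNi h
    · obtain ⟨n, c, hc0, hcn, hmem, hstep⟩ := fwd j i hNj h.le
      refine ⟨n, fun m => c (n - m), by simp [hcn], by simp [hc0], ?_, ?_⟩
      · intro m _; exact hmem (n - m) (by omega)
      · intro m hm
        have := hstep (n - (m + 1)) (by omega)
        rw [show n - (m + 1) + 1 = n - m by omega] at this
        show (c (n - m), c (n - (m + 1))) ∈ E'
        rcases this with h | h
        · exact Or.inr h
        · exact Or.inl h
  intro x hx y hy
  have key : ∀ z ∈ (s '' {i | N ≤ i}) ∪ ((s ∘ k) '' {i | N ≤ i}),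
      ∃ j, N ≤ j ∧ z = s j := by
    rintro z (⟨i, hi, rfl⟩ | ⟨i, hi, rfl⟩)
    · exact ⟨i, hi, rfl⟩
    · exact ⟨k i, le_trans hi (hk.le_apply), rfl⟩
  obtain ⟨i, hi, rfl⟩ := key x hx
  obtain ⟨j, hj, rfl⟩ := key y hy
  exact chain i j hi hj
end

section
/- Let (X, ξ) be a pointed metric space and let s and t be coarse sequences in (X, ξ). If s ≡ε t, then s ≡σ t. -/
open Filter

/-- A coarse sequence in a pointed metric space `(X, ξ)`: a sequence with uniformly
bounded consecutive steps that diverges from `ξ` to infinity. -/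
def IsCoarseSeqM {X : Type*} [PseudoMetricSpace X] (ξ : X) (s : ℕ → X) : Prop :=
  (∃ K : ℝ, ∀ i : ℕ, dist (s i) (s (i + 1)) ≤ K) ∧
  Tendsto (fun i => dist ξ (s i)) atTop atTop

/-- σ-equivalence of coarse sequences: `s` and `t` are connected by a finite chain of
coarse sequences in which each consecutive pair is related by the subsequence relation. -/
def SigmaRelM {X : Type*} [PseudoMetricSpace X] (ξ : X) (s t : ℕ → X) : Prop :=
  ∃ (n : ℕ) (u : ℕ → ℕ → X), u 0 = s ∧ u n = t ∧ (∀ i ≤ n, IsCoarseSeqM ξ (u i)) ∧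
    ∀ i < n, IsSubseq (u i) (u (i + 1)) ∨ IsSubseq (u (i + 1)) (u i)

/-- `x` and `y` are connected inside `A` by a finite chain with steps of length `≤ K`. -/
def ChainM {X : Type*} [PseudoMetricSpace X] (K : ℝ) (A : Set X) (x y : X) : Prop :=
  ∃ (n : ℕ) (c : ℕ → X), c 0 = x ∧ c n = y ∧ (∀ i ≤ n, c i ∈ A) ∧
    ∀ i < n, dist (c i) (c (i + 1)) ≤ K

/-- ε-equivalence: there is `K > 0` such that for every `r > 0` there is `N` with the
tails `{s i : i ≥ N}` and `{t i : i ≥ N}` lying in the same `K`-connected component of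
`X \ {x : dist ξ x ≤ r}`. -/
def EpsRelM {X : Type*} [PseudoMetricSpace X] (ξ : X) (s t : ℕ → X) : Prop :=
  ∃ K > (0 : ℝ), ∀ r > (0 : ℝ), ∃ N : ℕ,
    ∀ x ∈ (s '' {i | N ≤ i}) ∪ (t '' {i | N ≤ i}),
    ∀ y ∈ (s '' {i | N ≤ i}) ∪ (t '' {i | N ≤ i}),
      ChainM K {z | r < dist ξ z} x y

/-- The set of coarse sequences in the pointed metric space `(X, ξ)`. -/
def CoarseSeqM {X : Type*} [PseudoMetricSpace X] (ξ : X) :=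
  {s : ℕ → X // IsCoarseSeqM ξ s}

/-- `σ(X, ξ)`: the quotient of the set of coarse sequences by σ-equivalence. -/
def SigmaQuotM {X : Type*} [PseudoMetricSpace X] (ξ : X) :=
  Quot (fun s t : CoarseSeqM ξ => SigmaRelM ξ s.1 t.1)

/-- `ε(X, ξ)`: the quotient of the set of coarse sequences by ε-equivalence. -/
def EpsQuotM {X : Type*} [PseudoMetricSpace X] (ξ : X) :=
  Quot (fun s t : CoarseSeqM ξ => EpsRelM ξ s.1 t.1)


namespace EpsSigmaAux

/-- Offsets of blocks of lengths `L`. -/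
def off (L : ℕ → ℕ) : ℕ → ℕ
  | 0 => 0
  | k + 1 => off L k + L k

variable {X : Type*} [MetricSpace X]
set_option linter.unusedSectionVars false

lemma off_mono (L : ℕ → ℕ) : Monotone (off L) := by
  apply monotone_nat_of_le_succ
  intro k; simp [off]

lemma le_off (L : ℕ → ℕ) (hL : ∀ k, 1 ≤ L k) : ∀ k, k ≤ off L k := by
  intro k
  induction k with
  | zero => simp [off]
  | succ n ih => have := hL n; simp [off]; omega

lemma exists_blk (L : ℕ → ℕ) (hL : ∀ k, 1 ≤ L k) (n : ℕ) : ∃ k, n < off L (k + 1) :=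
  ⟨n, lt_of_lt_of_le (Nat.lt_succ_self n) (le_off L hL (n + 1))⟩

/-- The block index of position `n`. -/
def blk (L : ℕ → ℕ) (hL : ∀ k, 1 ≤ L k) (n : ℕ) : ℕ :=
  Nat.find (exists_blk L hL n)

lemma blk_spec (L : ℕ → ℕ) (hL : ∀ k, 1 ≤ L k) (n : ℕ) :
    off L (blk L hL n) ≤ n ∧ n < off L (blk L hL n + 1) := by
  refine ⟨?_, Nat.find_spec (exists_blk L hL n)⟩
  rcases Nat.eq_zero_or_pos (blk L hL n) with h | h
  · rw [h]; exact Nat.zero_le n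
  · have hlt : blk L hL n - 1 < blk L hL n := by omega
    have := Nat.find_min (exists_blk L hL n) hlt
    have heq : blk L hL n - 1 + 1 = blk L hL n := by omega
    rw [heq] at this
    omega

lemma blk_eq (L : ℕ → ℕ) (hL : ∀ k, 1 ≤ L k) (n k : ℕ)
    (h1 : off L k ≤ n) (h2 : n < off L (k + 1)) : blk L hL n = k := by
  rw [blk, Nat.find_eq_iff]
  refine ⟨h2, ?_⟩
  intro j hj hcon
  have : off L (j + 1) ≤ off L k := off_mono L (by omega)
  omega

/-- The infinite concatenation of the blocks `f k`, where block `k` occupies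
positions `[off L k, off L (k+1)]` (with overlapping endpoints). -/
def glue (f : ℕ → ℕ → X) (L : ℕ → ℕ) (hL : ∀ k, 1 ≤ L k) (n : ℕ) : X :=
  f (blk L hL n) (n - off L (blk L hL n))

lemma glue_eval (f : ℕ → ℕ → X) (L : ℕ → ℕ) (hL : ∀ k, 1 ≤ L k)
    (hglue : ∀ k, f (k + 1) 0 = f k (L k)) (k p : ℕ) (hp : p ≤ L k) :
    glue f L hL (off L k + p) = f k p := by
  rcases Nat.lt_or_ge p (L k) with hlt | hge
  · have hb : blk L hL (off L k + p) = k := by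
      apply blk_eq
      · omega
      · show off L k + p < off L k + L k
        omega
    rw [glue, hb]
    congr 1
    omega
  · have hpe : p = L k := le_antisymm hp hge
    subst hpe
    have he : off L k + L k = off L (k + 1) := rfl
    have hb : blk L hL (off L k + L k) = k + 1 := by
      apply blk_eq
      · rw [he]
      · show off L k + L k < off L (k + 1) + L (k + 1)
        have := hL (k + 1); omega
    rw [glue, hb, he, Nat.sub_self, hglue]

lemma glue_step (f : ℕ → ℕ → X) (L : ℕ → ℕ) (hL : ∀ k, 1 ≤ L k)
    (hglue : ∀ k, f (k + 1) 0 = f k (L k)) (n : ℕ) :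
    ∃ k p, p < L k ∧ glue f L hL n = f k p ∧ glue f L hL (n + 1) = f k (p + 1) := by
  obtain ⟨h1, h2⟩ := blk_spec L hL n
  set k := blk L hL n
  refine ⟨k, n - off L k, ?_, rfl, ?_⟩
  · have : off L (k + 1) = off L k + L k := rfl
    omega
  · have hn1 : n + 1 = off L k + (n - off L k + 1) := by omega
    rw [hn1]
    apply glue_eval f L hL hglue
    have : off L (k + 1) = off L k + L k := rfl
    omega

lemma blk_ge (L : ℕ → ℕ) (hL : ∀ k, 1 ≤ L k) (k n : ℕ) (h : off L k ≤ n) :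
    k ≤ blk L hL n := by
  by_contra hcon
  push_neg at hcon
  have h2 := (blk_spec L hL n).2
  have : off L (blk L hL n + 1) ≤ off L k := off_mono L (by omega)
  omega

lemma glue_tendsto (ξ : X) (f : ℕ → ℕ → X) (L : ℕ → ℕ) (hL : ∀ k, 1 ≤ L k)
    (g : ℕ → ℝ) (hg : Tendsto g atTop atTop)
    (hlow : ∀ k p, p ≤ L k → g k ≤ dist ξ (f k p)) :
    Tendsto (fun n => dist ξ (glue f L hL n)) atTop atTop := by
  rw [tendsto_atTop_atTop]
  intro M
  rw [tendsto_atTop_atTop] at hg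
  obtain ⟨k0, hk0⟩ := hg M
  refine ⟨off L k0, fun n hn => ?_⟩
  obtain ⟨h1, h2⟩ := blk_spec L hL n
  have hb : k0 ≤ blk L hL n := blk_ge L hL k0 n hn
  have hp : n - off L (blk L hL n) ≤ L (blk L hL n) := by
    have : off L (blk L hL n + 1) = off L (blk L hL n) + L (blk L hL n) := rfl
    omega
  calc M ≤ g (blk L hL n) := hk0 _ hb
    _ ≤ dist ξ (glue f L hL n) := hlow _ _ hp

end EpsSigmaAux

/-- in a pointed metric space, ε-equivalent coarse sequences are
σ-equivalent. -/
theorem epsRelM_implies_sigmaRelM {X : Type*} [MetricSpace X] (ξ : X) (s t : ℕ → X)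
    (hs : IsCoarseSeqM ξ s) (ht : IsCoarseSeqM ξ t) (h : EpsRelM ξ s t) :
    SigmaRelM ξ s t := by
  classical
  obtain ⟨K, hK0, hP⟩ := h
  obtain ⟨⟨Ks, hKs⟩, hsd⟩ := id hs
  obtain ⟨⟨Kt, hKt⟩, htd⟩ := id ht
  -- chains between far tails
  have hP' : ∀ k : ℕ, ∃ N : ℕ, ∀ i, N ≤ i → ∀ j, N ≤ j →
      ChainM K {z | ((k : ℝ) + 1) < dist ξ z} (s i) (t j) := by
    intro k
    obtain ⟨N, hN⟩ := hP ((k : ℝ) + 1) (by positivity)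
    exact ⟨N, fun i hi j hj => hN _ (Or.inl ⟨i, hi, rfl⟩) _ (Or.inr ⟨j, hj, rfl⟩)⟩
  choose Nc hNc using hP'
  -- divergence indices
  have hdiv : ∀ k : ℕ, ∃ N : ℕ, ∀ i, N ≤ i →
      (k : ℝ) ≤ dist ξ (s i) ∧ (k : ℝ) ≤ dist ξ (t i) := by
    intro k
    obtain ⟨N1, hN1⟩ := (tendsto_atTop_atTop.mp hsd) (k : ℝ)
    obtain ⟨N2, hN2⟩ := (tendsto_atTop_atTop.mp htd) (k : ℝ)
    exact ⟨max N1 N2, fun i hi =>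
      ⟨hN1 i (le_trans (le_max_left _ _) hi), hN2 i (le_trans (le_max_right _ _) hi)⟩⟩
  choose Nd hNd using hdiv
  -- the anchor indices A
  obtain ⟨A, hA0, hAsucc⟩ : ∃ A : ℕ → ℕ, A 0 = max (Nc 0) (Nd 0) ∧
      ∀ k, A (k + 1) = max (A k + 1) (max (Nc (k + 1)) (Nd (k + 1))) :=
    ⟨fun k => Nat.rec (max (Nc 0) (Nd 0))
      (fun k ak => max (ak + 1) (max (Nc (k + 1)) (Nd (k + 1)))) k, rfl, fun _ => rfl⟩
  have hANc : ∀ k, Nc k ≤ A k := by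
    intro k
    cases k with
    | zero => rw [hA0]; exact le_max_left _ _
    | succ j => rw [hAsucc]; exact le_trans (le_max_left _ _) (le_max_right _ _)
  have hANd : ∀ k, Nd k ≤ A k := by
    intro k
    cases k with
    | zero => rw [hA0]; exact le_max_right _ _
    | succ j => rw [hAsucc]; exact le_trans (le_max_right _ _) (le_max_right _ _)
  have hAstep : ∀ k, A k + 1 ≤ A (k + 1) := by
    intro k; rw [hAsucc]; exact le_max_left _ _
  have hAsm : StrictMono A := strictMono_nat_of_lt_succ (fun k => by have := hAstep k; omega)
  -- the chains
  have hchain : ∀ k : ℕ, ChainM K {z | ((k : ℝ) + 1) < dist ξ z} (s (A k)) (t (A k)) :=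
    fun k => hNc k (A k) (hANc k) (A k) (hANc k)
  simp only [ChainM] at hchain
  choose m c hc0 hcm hcmem hcstep using hchain
  have hcmem' : ∀ k i, i ≤ m k → (k : ℝ) + 1 < dist ξ (c k i) := by
    intro k i hi
    have := hcmem k i hi
    simpa using this
  -- block start indices
  obtain ⟨sa, hsa0, hsas⟩ : ∃ sa : ℕ → ℕ, sa 0 = 0 ∧ ∀ j, sa (j + 1) = A j + 1 :=
    ⟨fun k => Nat.rec 0 (fun j _ => A j + 1) k, rfl, fun _ => rfl⟩
  have hsaA : ∀ k, sa k ≤ A k := by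
    intro k
    cases k with
    | zero => rw [hsa0]; exact Nat.zero_le _
    | succ j => rw [hsas]; exact hAstep j
  obtain ⟨D, hDdef⟩ : ∃ D : ℕ → ℕ, ∀ k, D k = A k - sa k := ⟨_, fun _ => rfl⟩
  have hsaDA : ∀ k, sa k + D k = A k := by
    intro k; have := hsaA k; rw [hDdef]; omega
  obtain ⟨L, hLdef⟩ : ∃ L : ℕ → ℕ, ∀ k, L k = 3 * D k + 2 * m k + 1 := ⟨_, fun _ => rfl⟩
  have hL1 : ∀ k, 1 ≤ L k := by intro k; rw [hLdef]; omega
  -- the blocks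
  obtain ⟨f, hfdef⟩ : ∃ f : ℕ → ℕ → X, ∀ k p, f k p =
      if p ≤ D k then s (sa k + p)
      else if p ≤ D k + m k then c k (p - D k)
      else if p ≤ 2 * D k + m k then t (A k - (p - (D k + m k)))
      else if p ≤ 3 * D k + m k then t (sa k + (p - (2 * D k + m k)))
      else if p ≤ 3 * D k + 2 * m k then c k (m k - (p - (3 * D k + m k)))
      else s (A k + 1) := ⟨_, fun _ _ => rfl⟩
  -- the key fact s (A k) = t (A k) when m k = 0
  have hst : ∀ k, m k = 0 → s (A k) = t (A k) := by
    intro k hm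
    rw [← hc0 k]
    have := hcm k
    rw [hm] at this
    exact this
  -- value lemmas
  have hf1 : ∀ k p, p ≤ D k → f k p = s (sa k + p) := by
    intro k p hp; rw [hfdef, if_pos hp]
  have hf2 : ∀ k p, D k ≤ p → p ≤ D k + m k → f k p = c k (p - D k) := by
    intro k p h1 h2
    rw [hfdef]
    rcases eq_or_lt_of_le h1 with he | hlt
    · rw [if_pos (by omega), ← he, hsaDA, Nat.sub_self, hc0]
    · rw [if_neg (by omega), if_pos h2]
  have hf3 : ∀ k p, D k + m k ≤ p → p ≤ 2 * D k + m k →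
      f k p = t (A k - (p - (D k + m k))) := by
    intro k p h1 h2
    rw [hfdef]
    by_cases hb1 : p ≤ D k
    · have hm : m k = 0 := by omega
      have hpD : p = D k := by omega
      rw [if_pos hb1, hpD, hsaDA, hst k hm]
      congr 1
      omega
    · by_cases hb2 : p ≤ D k + m k
      · rw [if_neg hb1, if_pos hb2]
        have hpe : p - D k = m k := by omega
        rw [hpe, hcm]
        congr 1
        omega
      · rw [if_neg hb1, if_neg hb2, if_pos h2]
  have hf4 : ∀ k p, 2 * D k + m k ≤ p → p ≤ 3 * D k + m k →
      f k p = t (sa k + (p - (2 * D k + m k))) := by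
    intro k p h1 h2
    rw [hfdef]
    by_cases hb1 : p ≤ D k
    · have hD0 : D k = 0 := by omega
      have hm : m k = 0 := by omega
      have e1 : sa k + p = A k := by have := hsaDA k; omega
      have e2 : sa k + (p - (2 * D k + m k)) = A k := by have := hsaDA k; omega
      rw [if_pos hb1, e1, e2, hst k hm]
    · by_cases hb2 : p ≤ D k + m k
      · have hD0 : D k = 0 := by omega
        have hpm : p = m k := by omega
        rw [if_neg hb1, if_pos hb2]
        have : p - D k = m k := by omega
        rw [this, hcm]
        have hsaA' : sa k = A k := by have := hsaDA k; omega
        congr 1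
        omega
      · by_cases hb3 : p ≤ 2 * D k + m k
        · rw [if_neg hb1, if_neg hb2, if_pos hb3]
          have e1 : A k - (p - (D k + m k)) = sa k := by
            have := hsaDA k; omega
          have e2 : sa k + (p - (2 * D k + m k)) = sa k := by omega
          rw [e1, e2]
        · rw [if_neg hb1, if_neg hb2, if_neg hb3, if_pos h2]
  have hf5 : ∀ k p, 3 * D k + m k ≤ p → p ≤ 3 * D k + 2 * m k →
      f k p = c k (m k - (p - (3 * D k + m k))) := by
    intro k p h1 h2
    rw [hfdef]
    by_cases hb1 : p ≤ D k
    · have hD0 : D k = 0 := by omega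
      have hm : m k = 0 := by omega
      have e1 : sa k + p = A k := by have := hsaDA k; omega
      have e2 : m k - (p - (3 * D k + m k)) = 0 := by omega
      rw [if_pos hb1, e1, e2, hc0]
    · by_cases hb2 : p ≤ D k + m k
      · have hD0 : D k = 0 := by omega
        have hpm : p = m k := by omega
        rw [if_neg hb1, if_pos hb2]
        congr 1
        omega
      · by_cases hb3 : p ≤ 2 * D k + m k
        · have hD0 : D k = 0 := by omega
          have hpm : p = m k := by omega
          rw [if_neg hb1, if_neg hb2, if_pos hb3]
          have e1 : A k - (p - (D k + m k)) = A k := by omega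
          have e2 : m k - (p - (3 * D k + m k)) = m k := by omega
          rw [e1, e2, hcm]
        · by_cases hb4 : p ≤ 3 * D k + m k
          · have hpe : p = 3 * D k + m k := by omega
            rw [if_neg hb1, if_neg hb2, if_neg hb3, if_pos hb4]
            have e1 : sa k + (p - (2 * D k + m k)) = A k := by
              have := hsaDA k; omega
            have e2 : m k - (p - (3 * D k + m k)) = m k := by omega
            rw [e1, e2, hcm]
          · rw [if_neg hb1, if_neg hb2, if_neg hb3, if_neg hb4, if_pos h2]
  have hf6 : ∀ k, f k (L k) = s (A k + 1) := by
    intro k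
    rw [hfdef, hLdef]
    rw [if_neg (by omega), if_neg (by omega), if_neg (by omega), if_neg (by omega),
      if_neg (by omega)]
  have hglue : ∀ k, f (k + 1) 0 = f k (L k) := by
    intro k
    rw [hf6, hf1 (k + 1) 0 (Nat.zero_le _), Nat.add_zero, hsas]
  -- step bound
  have hKs' : Ks ≤ max (max Ks Kt) K := le_trans (le_max_left _ _) (le_max_left _ _)
  have hKt' : Kt ≤ max (max Ks Kt) K := le_trans (le_max_right _ _) (le_max_left _ _)
  have hK' : K ≤ max (max Ks Kt) K := le_max_right _ _
  have hDA : ∀ k, D k ≤ A k := by intro k; have := hsaDA k; omega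
  have hstep : ∀ k p, p < L k → dist (f k p) (f k (p + 1)) ≤ max (max Ks Kt) K := by
    intro k p hp
    rw [hLdef] at hp
    by_cases h1 : p < D k
    · rw [hf1 k p (by omega), hf1 k (p + 1) (by omega)]
      have e : sa k + (p + 1) = (sa k + p) + 1 := by omega
      rw [e]
      exact (hKs _).trans hKs'
    · by_cases h2 : p < D k + m k
      · rw [hf2 k p (by omega) (by omega), hf2 k (p + 1) (by omega) (by omega)]
        have e : p + 1 - D k = (p - D k) + 1 := by omega
        rw [e]
        exact (hcstep k (p - D k) (by omega)).trans hK'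
      · by_cases h3 : p < 2 * D k + m k
        · rw [hf3 k p (by omega) (by omega), hf3 k (p + 1) (by omega) (by omega)]
          have e : A k - (p - (D k + m k)) = (A k - (p + 1 - (D k + m k))) + 1 := by
            have := hDA k; omega
          rw [e, dist_comm]
          exact (hKt _).trans hKt'
        · by_cases h4 : p < 3 * D k + m k
          · rw [hf4 k p (by omega) (by omega), hf4 k (p + 1) (by omega) (by omega)]
            have e : sa k + (p + 1 - (2 * D k + m k)) = (sa k + (p - (2 * D k + m k))) + 1 := by
              omega
            rw [e]
            exact (hKt _).trans hKt'
          · by_cases h5 : p < 3 * D k + 2 * m k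
            · rw [hf5 k p (by omega) (by omega), hf5 k (p + 1) (by omega) (by omega)]
              have e : m k - (p - (3 * D k + m k)) = (m k - (p + 1 - (3 * D k + m k))) + 1 := by
                omega
              rw [e, dist_comm]
              exact (hcstep k (m k - (p + 1 - (3 * D k + m k))) (by omega)).trans hK'
            · have hpe : p = 3 * D k + 2 * m k := by omega
              have hpL : p + 1 = L k := by rw [hLdef]; omega
              rw [hf5 k p (by omega) (by omega), hpL, hf6]
              have e : m k - (p - (3 * D k + m k)) = 0 := by omega
              rw [e, hc0]
              exact (hKs _).trans hKs'
  -- lower bounds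
  have hsa_low : ∀ k i, sa k ≤ i →
      ((k : ℝ) - 1 ≤ dist ξ (s i)) ∧ ((k : ℝ) - 1 ≤ dist ξ (t i)) := by
    intro k i hi
    cases k with
    | zero =>
      have h1 : (0 : ℝ) ≤ dist ξ (s i) := dist_nonneg
      have h2 : (0 : ℝ) ≤ dist ξ (t i) := dist_nonneg
      constructor <;> push_cast <;> linarith
    | succ j =>
      have hi' : Nd j ≤ i := by
        have h1 := hANd j
        have h2 := hsas j
        omega
      obtain ⟨hs1, ht1⟩ := hNd j i hi'
      constructor <;> push_cast <;> linarith
  have hlow : ∀ k p, p ≤ L k → (k : ℝ) - 1 ≤ dist ξ (f k p) := by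
    intro k p hp
    rw [hLdef] at hp
    by_cases h1 : p ≤ D k
    · rw [hf1 k p h1]
      exact (hsa_low k _ (Nat.le_add_right _ _)).1
    · by_cases h2 : p ≤ D k + m k
      · rw [hf2 k p (by omega) h2]
        have := hcmem' k (p - D k) (by omega)
        linarith
      · by_cases h3 : p ≤ 2 * D k + m k
        · rw [hf3 k p (by omega) h3]
          refine (hsa_low k _ ?_).2
          have := hsaDA k; omega
        · by_cases h4 : p ≤ 3 * D k + m k
          · rw [hf4 k p (by omega) h4]
            exact (hsa_low k _ (Nat.le_add_right _ _)).2
          · by_cases h5 : p ≤ 3 * D k + 2 * m k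
            · rw [hf5 k p (by omega) h5]
              have := hcmem' k (m k - (p - (3 * D k + m k))) (by omega)
              linarith
            · have hpe : p = L k := by rw [hLdef]; omega
              rw [hpe, hf6]
              refine (hsa_low k _ ?_).1
              have := hsaA k; omega
  -- the glued sequence
  set u : ℕ → X := EpsSigmaAux.glue f L hL1 with hu
  have hucoarse : IsCoarseSeqM ξ u := by
    constructor
    · refine ⟨max (max Ks Kt) K, fun n => ?_⟩
      obtain ⟨k, p, hp, e1, e2⟩ := EpsSigmaAux.glue_step f L hL1 hglue n
      rw [hu, e1, e2]
      exact hstep k p hp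
    · refine EpsSigmaAux.glue_tendsto ξ f L hL1 (fun k => (k : ℝ) - 1) ?_ hlow
      have := tendsto_natCast_atTop_atTop (R := ℝ)
      exact tendsto_atTop_add_const_right atTop (-1) this |>.congr (fun k => by ring)
  -- the block-locating function κ
  have hAk : ∀ i : ℕ, ∃ k, i ≤ A k := fun i => ⟨i, hAsm.le_apply⟩
  obtain ⟨κ, hκ1, hκ2⟩ : ∃ κ : ℕ → ℕ, (∀ i, i ≤ A (κ i)) ∧ (∀ i j, j < κ i → A j < i) :=
    ⟨fun i => Nat.find (hAk i), fun i => Nat.find_spec (hAk i), fun i j hj => by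
      have := Nat.find_min (hAk i) hj; omega⟩
  have hκsa : ∀ i, sa (κ i) ≤ i := by
    intro i
    cases hk : κ i with
    | zero => rw [hsa0]; exact Nat.zero_le _
    | succ j =>
      rw [hsas]
      have := hκ2 i j (by omega)
      omega
  have hκmono : ∀ i i', i ≤ i' → κ i ≤ κ i' := by
    intro i i' hii
    by_contra hc
    push_neg at hc
    have h1 := hκ2 i (κ i') hc
    have h2 := hκ1 i'
    omega
  have hoffsucc : ∀ k, EpsSigmaAux.off L (k + 1) = EpsSigmaAux.off L k + L k := fun _ => rfl
  have hiD : ∀ i, i - sa (κ i) ≤ D (κ i) := by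
    intro i
    have h1 := hκ1 i
    have h2 := hκsa i
    have h3 := hsaDA (κ i)
    omega
  -- s is a subsequence of u
  have hssub : IsSubseq s u := by
    refine ⟨fun i => EpsSigmaAux.off L (κ i) + (i - sa (κ i)),
      strictMono_nat_of_lt_succ ?_, ?_⟩
    · intro i
      have hm := hκmono i (i + 1) (by omega)
      rcases eq_or_lt_of_le hm with he | hlt
      · rw [← he]
        have := hκsa i
        omega
      · calc EpsSigmaAux.off L (κ i) + (i - sa (κ i))
            < EpsSigmaAux.off L (κ i) + L (κ i) := by
              have := hiD i; have := hL1 (κ i); rw [hLdef]; omega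
          _ = EpsSigmaAux.off L (κ i + 1) := (hoffsucc _).symm
          _ ≤ EpsSigmaAux.off L (κ (i + 1)) := EpsSigmaAux.off_mono L hlt
          _ ≤ EpsSigmaAux.off L (κ (i + 1)) + ((i + 1) - sa (κ (i + 1))) := Nat.le_add_right _ _
    · intro i
      rw [hu, EpsSigmaAux.glue_eval f L hL1 hglue (κ i) _
        (le_trans (hiD i) (by rw [hLdef]; omega)), hf1 _ _ (hiD i)]
      congr 1
      have := hκsa i
      omega
  -- t is a subsequence of u
  have htsub : IsSubseq t u := by
    refine ⟨fun i => EpsSigmaAux.off L (κ i) + (2 * D (κ i) + m (κ i) + (i - sa (κ i))),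
      strictMono_nat_of_lt_succ ?_, ?_⟩
    · intro i
      have hm := hκmono i (i + 1) (by omega)
      rcases eq_or_lt_of_le hm with he | hlt
      · rw [← he]
        have := hκsa i
        omega
      · calc EpsSigmaAux.off L (κ i) + (2 * D (κ i) + m (κ i) + (i - sa (κ i)))
            < EpsSigmaAux.off L (κ i) + L (κ i) := by
              have := hiD i; rw [hLdef]; omega
          _ = EpsSigmaAux.off L (κ i + 1) := (hoffsucc _).symm
          _ ≤ EpsSigmaAux.off L (κ (i + 1)) := EpsSigmaAux.off_mono L hlt
          _ ≤ _ := Nat.le_add_right _ _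
    · intro i
      have hpb : 2 * D (κ i) + m (κ i) + (i - sa (κ i)) ≤ 3 * D (κ i) + m (κ i) := by
        have := hiD i; omega
      rw [hu, EpsSigmaAux.glue_eval f L hL1 hglue (κ i) _
        (le_trans hpb (by rw [hLdef]; omega)),
        hf4 _ _ (by omega) hpb]
      congr 1
      have := hκsa i
      omega
  -- assemble
  refine ⟨2, fun i => if i = 0 then s else if i = 1 then u else t, rfl, rfl, ?_, ?_⟩
  · intro i hi
    interval_cases i
    · exact hs
    · exact hucoarse
    · exact ht
  · intro i hi
    interval_cases i
    · exact Or.inl hssub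
    · exact Or.inr htsub
end

section
/- Let (X, ξ) and (Y, η) be pointed coarse spaces and let f : X → Y be a coarse map with f(ξ) = η. If s and t are coarse sequences in (X, ξ) with s ≡ε t, then f ∘ s ≡ε f ∘ t; hence f induces a well-defined map εf : ε(X,ξ) → ε(Y,η) on ε-equivalence classes. -/
/-- a basepoint-preserving coarse map `f : (X,ξ) → (Y,η)` preserves
ε-equivalence, and hence induces a well-defined map `εf : ε(X,ξ) → ε(Y,η)`. -/
theorem epsRel_comp_and_induced {X Y : Type*} (CX : CoarseStructure X)
    (CY : CoarseStructure Y) (ξ : X) (η : Y) (f : X → Y)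
    (hf : IsCoarseMap CX CY f) (hξ : f ξ = η) :
    (∀ s t : ℕ → X, IsCoarseSeq CX ξ s → IsCoarseSeq CX ξ t →
      EpsRel CX ξ s t → EpsRel CY η (f ∘ s) (f ∘ t)) ∧
    ∃ F : EpsQuot CX ξ → EpsQuot CY η,
      ∀ (s : CoarseSeq CX ξ) (h : IsCoarseSeq CY η (f ∘ s.1)),
        F (Quot.mk _ s) = Quot.mk _ ⟨f ∘ s.1, h⟩ := by
  obtain ⟨hb, hp⟩ := hf
  have main : ∀ s t : ℕ → X, IsCoarseSeq CX ξ s → IsCoarseSeq CX ξ t →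
      EpsRel CX ξ s t → EpsRel CY η (f ∘ s) (f ∘ t) := by
    rintro s t _ _ ⟨E, hE, hch⟩
    refine ⟨(fun p : X × X => (f p.1, f p.2)) '' E, hb E hE, ?_⟩
    intro B hB hηB
    have hξB : ξ ∈ f ⁻¹' B := by simp only [Set.mem_preimage, hξ]; exact hηB
    obtain ⟨N, hN⟩ := hch (f ⁻¹' B) (hp B hB) hξB
    refine ⟨N, ?_⟩
    have key : ∀ x ∈ ((f ∘ s) '' {i | N ≤ i}) ∪ ((f ∘ t) '' {i | N ≤ i}),
        ∃ x', x' ∈ (s '' {i | N ≤ i}) ∪ (t '' {i | N ≤ i}) ∧ f x' = x := by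
      rintro x (⟨i, hi, rfl⟩ | ⟨i, hi, rfl⟩)
      · exact ⟨s i, Or.inl ⟨i, hi, rfl⟩, rfl⟩
      · exact ⟨t i, Or.inr ⟨i, hi, rfl⟩, rfl⟩
    intro x hx y hy
    obtain ⟨x', hx', rfl⟩ := key x hx
    obtain ⟨y', hy', rfl⟩ := key y hy
    obtain ⟨n, c, hc0, hcn, hcA, hcE⟩ := hN x' hx' y' hy'
    refine ⟨n, f ∘ c, by simp [hc0], by simp [hcn], ?_, ?_⟩
    · intro i hi
      have := hcA i hi
      simp only [Set.mem_compl_iff, Set.mem_preimage] at this ⊢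
      exact this
    · intro i hi
      exact ⟨(c i, c (i + 1)), hcE i hi, rfl⟩
  refine ⟨main, ?_⟩
  have hcs : ∀ s : ℕ → X, IsCoarseSeq CX ξ s → IsCoarseSeq CY η (f ∘ s) := by
    rintro s ⟨hsp, E, hE, hsE⟩
    constructor
    · intro B hB hηB
      have hξB : ξ ∈ f ⁻¹' B := by simp only [Set.mem_preimage, hξ]; exact hηB
      obtain ⟨N, hN⟩ := hsp (f ⁻¹' B) (hp B hB) hξB
      exact ⟨N, fun i hi => hN i hi⟩
    · exact ⟨(fun p : X × X => (f p.1, f p.2)) '' E, hb E hE,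
        fun i => ⟨(s i, s (i + 1)), hsE i, rfl⟩⟩
  refine ⟨Quot.lift (fun s : CoarseSeq CX ξ =>
      Quot.mk _ (⟨f ∘ s.1, hcs s.1 s.2⟩ : CoarseSeq CY η)) ?_, fun s h => rfl⟩
  intro a b hab
  exact Quot.sound (main a.1 b.1 a.2 b.2 hab)
end

section
/- Let (X, ξ) and (Y, η) be pointed coarse spaces and let f, g : X → Y be close coarse maps with f(ξ) = g(ξ) = η. Then for every coarse sequence s in (X, ξ), f ∘ s ≡σ g ∘ s; hence the induced maps σf and σg on σ-equivalence classes coincide (coarse invariance of σ). -/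
lemma comp_coarseSeq {X Y : Type*} (CX : CoarseStructure X) (CY : CoarseStructure Y)
    (ξ : X) (η : Y) (f : X → Y) (hf : IsCoarseMap CX CY f) (hfξ : f ξ = η)
    (s : ℕ → X) (hs : IsCoarseSeq CX ξ s) : IsCoarseSeq CY η (f ∘ s) := by
  obtain ⟨hsp, E0, hE0, hE0s⟩ := hs
  constructor
  · intro B hB hηB
    have hpre : CX.IsBoundedSet (f ⁻¹' B) := hf.2 B hB
    have hξ : ξ ∈ f ⁻¹' B := by simp [Set.mem_preimage, hfξ, hηB]
    obtain ⟨N, hN⟩ := hsp (f ⁻¹' B) hpre hξ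
    exact ⟨N, fun i hi hmem => hN i hi hmem⟩
  · refine ⟨(fun p : X × X => (f p.1, f p.2)) '' E0, hf.1 E0 hE0, fun i => ?_⟩
    exact ⟨(s i, s (i + 1)), hE0s i, rfl⟩

/-- if `f, g : (X,ξ) → (Y,η)` are close basepoint-preserving coarse maps,
then `f ∘ s ≡σ g ∘ s` for every coarse sequence `s`; hence the induced maps on
σ-equivalence classes coincide (coarse invariance of σ). -/
theorem sigma_coarse_invariance {X Y : Type*} (CX : CoarseStructure X)
    (CY : CoarseStructure Y) (ξ : X) (η : Y) (f g : X → Y)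
    (hf : IsCoarseMap CX CY f) (hg : IsCoarseMap CX CY g) (hfg : IsClose CY f g)
    (hfξ : f ξ = η) (hgξ : g ξ = η) :
    (∀ s : ℕ → X, IsCoarseSeq CX ξ s → SigmaRel CY η (f ∘ s) (g ∘ s)) ∧
    ∀ (s : CoarseSeq CX ξ) (h₁ : IsCoarseSeq CY η (f ∘ s.1))
      (h₂ : IsCoarseSeq CY η (g ∘ s.1)),
      (Quot.mk (fun a b : CoarseSeq CY η => SigmaRel CY η a.1 b.1) ⟨f ∘ s.1, h₁⟩ :
        SigmaQuot CY η) = Quot.mk _ ⟨g ∘ s.1, h₂⟩ := by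
  have main : ∀ s : ℕ → X, IsCoarseSeq CX ξ s → SigmaRel CY η (f ∘ s) (g ∘ s) := by
    intro s hs
    obtain ⟨hsp, E0, hE0, hE0s⟩ := hs
    -- the interleaved sequence
    set w : ℕ → Y := fun n => if Even n then f (s (n / 2)) else g (s (n / 2)) with hw
    have hweven : ∀ i : ℕ, w (2 * i) = f (s i) := by
      intro i
      have : Even (2 * i) := even_two_mul i
      simp [hw, this, Nat.mul_div_cancel_left i (by norm_num : 0 < 2)]
    have hwodd : ∀ i : ℕ, w (2 * i + 1) = g (s i) := by
      intro i
      have h1 : ¬ Even (2 * i + 1) := by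
        simp [Nat.even_add_one, even_two_mul]
      have h2 : (2 * i + 1) / 2 = i := by omega
      simp [hw, h1, h2]
    have hEf : (fun p : X × X => (f p.1, f p.2)) '' E0 ∈ CY.controlled := hf.1 E0 hE0
    have hFinv : {p : Y × Y | (p.2, p.1) ∈ Set.range (fun x : X => (f x, g x))}
        ∈ CY.controlled := CY.inv_mem _ hfg
    -- controlled set for w
    set G : Set (Y × Y) := Set.range (fun x : X => (f x, g x)) ∪
      {p : Y × Y | ∃ z, (p.1, z) ∈ {q : Y × Y | (q.2, q.1) ∈ Set.range (fun x : X => (f x, g x))}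
        ∧ (z, p.2) ∈ (fun p : X × X => (f p.1, f p.2)) '' E0} with hG
    have hGc : G ∈ CY.controlled :=
      CY.union_mem _ _ hfg (CY.comp_mem _ _ hFinv hEf)
    have hwcons : ∀ n : ℕ, (w n, w (n + 1)) ∈ G := by
      intro n
      rcases Nat.even_or_odd n with ⟨k, hk⟩ | ⟨k, hk⟩
      · subst hk
        rw [show k + k = 2 * k by ring, hweven, hwodd]
        exact Or.inl ⟨s k, rfl⟩
      · subst hk
        rw [show 2 * k + 1 + 1 = 2 * (k + 1) by ring, hwodd, hweven]
        exact Or.inr ⟨f (s k), ⟨s k, rfl⟩, ⟨(s k, s (k + 1)), hE0s k, rfl⟩⟩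
    -- w is a coarse sequence
    have hwcoarse : IsCoarseSeq CY η w := by
      constructor
      · intro B hB hηB
        have hB1 : CX.IsBoundedSet (f ⁻¹' B) := hf.2 B hB
        have hB2 : CX.IsBoundedSet (g ⁻¹' B) := hg.2 B hB
        have hξ1 : ξ ∈ f ⁻¹' B := by simp [Set.mem_preimage, hfξ, hηB]
        have hξ2 : ξ ∈ g ⁻¹' B := by simp [Set.mem_preimage, hgξ, hηB]
        set A : Set X := f ⁻¹' B ∪ g ⁻¹' B with hA
        have hAb : CX.IsBoundedSet A := by
          have hU : (f ⁻¹' B) ×ˢ (f ⁻¹' B) ∪ (g ⁻¹' B) ×ˢ (g ⁻¹' B) ∈ CX.controlled :=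
            CX.union_mem _ _ hB1 hB2
          have hcomp := CX.comp_mem _ _ hU hU
          refine CX.mem_of_subset _ _ hcomp ?_
          rintro ⟨x, y⟩ ⟨hx, hy⟩
          refine ⟨ξ, ?_, ?_⟩
          · rcases hx with hx | hx
            · exact Or.inl ⟨hx, hξ1⟩
            · exact Or.inr ⟨hx, hξ2⟩
          · rcases hy with hy | hy
            · exact Or.inl ⟨hξ1, hy⟩
            · exact Or.inr ⟨hξ2, hy⟩
        have hξA : ξ ∈ A := Or.inl hξ1
        obtain ⟨N, hN⟩ := hsp A hAb hξA
        refine ⟨2 * N, fun i hi => ?_⟩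
        have hhalf : i / 2 ≥ N := by omega
        have hns := hN (i / 2) hhalf
        by_cases hev : Even i
        · simp only [hw, if_pos hev]
          intro hmem
          exact hns (Or.inl hmem)
        · simp only [hw, if_neg hev]
          intro hmem
          exact hns (Or.inr hmem)
      · exact ⟨G, hGc, hwcons⟩
    have hfs : IsCoarseSeq CY η (f ∘ s) :=
      comp_coarseSeq CX CY ξ η f hf hfξ s ⟨hsp, E0, hE0, hE0s⟩
    have hgs : IsCoarseSeq CY η (g ∘ s) :=
      comp_coarseSeq CX CY ξ η g hg hgξ s ⟨hsp, E0, hE0, hE0s⟩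
    refine ⟨2, fun i => if i = 0 then f ∘ s else if i = 1 then w else g ∘ s,
      rfl, rfl, ?_, ?_⟩
    · intro i hi
      interval_cases i
      · simpa using hfs
      · simpa using hwcoarse
      · simpa using hgs
    · intro i hi
      interval_cases i
      · refine Or.inl ?_
        simp only [if_pos, if_neg]
        refine ⟨fun i => 2 * i, strictMono_mul_left_of_pos (by norm_num), fun i => ?_⟩
        simp [Function.comp, (hweven i).symm]
      · refine Or.inr ?_
        simp only [if_neg, if_pos]
        refine ⟨fun i => 2 * i + 1, ?_, fun i => ?_⟩
        · intro a b hab; dsimp only; omega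
        · simp [Function.comp, (hwodd i).symm]
  refine ⟨main, fun s h₁ h₂ => ?_⟩
  exact Quot.sound (main s.1 s.2)
end

section
/- Let (X, ξ) be a pointed metric space that is proper (closed bounded sets are compact) and geodesic. Then there is a bijection between Ends(X), the set of ends of X, and σ(X,ξ), the set of σ-equivalence classes of coarse sequences in (X, ξ). -/
open Filter

open NNReal Topology

/-- A ray in a topological space: a proper continuous map `[0,∞) → X`. -/
def IsRay {X : Type*} [TopologicalSpace X] (r : ℝ≥0 → X) : Prop :=
  Continuous r ∧ ∀ K : Set X, IsCompact K → IsCompact (r ⁻¹' K)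

/-- Two rays converge to the same end if for every compact `K ⊆ X` there is `N`
such that `r₀([N,∞))` and `r₁([N,∞))` lie in the same path-connected component
of `X \ K`. -/
def SameEnd {X : Type*} [TopologicalSpace X] (r₀ r₁ : ℝ≥0 → X) : Prop :=
  ∀ K : Set X, IsCompact K → ∃ N : ℕ,
    ∀ x ∈ (r₀ '' {t : ℝ≥0 | (N : ℝ≥0) ≤ t}) ∪ (r₁ '' {t : ℝ≥0 | (N : ℝ≥0) ≤ t}),
    ∀ y ∈ (r₀ '' {t : ℝ≥0 | (N : ℝ≥0) ≤ t}) ∪ (r₁ '' {t : ℝ≥0 | (N : ℝ≥0) ≤ t}),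
      JoinedIn Kᶜ x y

/-- `Ends X`: the set of ends of `X`, i.e. rays modulo converging to the same end. -/
def Ends (X : Type*) [TopologicalSpace X] :=
  Quot (fun r₀ r₁ : {r : ℝ≥0 → X // IsRay r} => SameEnd r₀.1 r₁.1)

/-- A metric space is geodesic if any two points are joined by an isometric
embedding of the interval `[0, dist x y]`. -/
def IsGeodesicSpace (X : Type*) [MetricSpace X] : Prop :=
  ∀ x y : X, ∃ γ : ℝ → X, γ 0 = x ∧ γ (dist x y) = y ∧
    ∀ u ∈ Set.Icc 0 (dist x y), ∀ v ∈ Set.Icc 0 (dist x y),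
      dist (γ u) (γ v) = |u - v|

/-!
A coarse sequence `s` yields a ray by joining consecutive points by geodesics, and a ray yields a
coarse sequence by sampling it so finely that consecutive samples are at distance at most `1`.
Passing to a coarse subsequence does not change the end of the associated ray, because the two
rays meet at arbitrarily late times; hence rays of σ-equivalent sequences have the same end.
Conversely, if two rays converge to the same end, the paths joining their tails outside large
balls can be discretized into `1`-chains. Threading such chains alternately through the tails of
the two sampled sequences gives a single coarse sequence containing tails of both as
subsequences, so the sampled sequences are σ-equivalent. The two maps are mutually inverse: a
sequence is a subsequence of the samples of its geodesic ray, and a ray meets the geodesic ray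
through its samples at every sample.
-/

open Set Metric

section ConcatBlocks

variable {α : Type*} {L : ℕ → ℕ} {B : ℕ → ℕ → α}

def blockStart (L : ℕ → ℕ) (m : ℕ) : ℕ := ∑ k ∈ Finset.range m, L k

def blockIdx (L : ℕ → ℕ) (i : ℕ) : ℕ := Nat.findGreatest (fun m => blockStart L m ≤ i) i

/-- The concatenation of the blocks `B m 0, …, B m (L m - 1)`, `m = 0, 1, …`. -/
def concatBlocks (B : ℕ → ℕ → α) (L : ℕ → ℕ) (i : ℕ) : α :=
  B (blockIdx L i) (i - blockStart L (blockIdx L i))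

lemma blockStart_succ (L : ℕ → ℕ) (m : ℕ) : blockStart L (m + 1) = blockStart L m + L m :=
  Finset.sum_range_succ L m

lemma blockStart_strictMono (hL : ∀ k, 0 < L k) : StrictMono (blockStart L) :=
  strictMono_nat_of_lt_succ fun m => by have := hL m; rw [blockStart_succ]; omega

lemma blockIdx_blockStart_add (hL : ∀ k, 0 < L k) {m j : ℕ} (hj : j < L m) :
    blockIdx L (blockStart L m + j) = m := by
  have hmono := (blockStart_strictMono hL).monotone
  refine Nat.findGreatest_eq_iff.2 ⟨?_, fun _ => Nat.le_add_right _ _, fun n hmn _ hn => ?_⟩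
  · exact ((blockStart_strictMono hL).le_apply).trans (Nat.le_add_right _ _)
  · have := hmono (Nat.succ_le_of_lt hmn)
    rw [blockStart_succ] at this
    omega

lemma concatBlocks_blockStart_add (hL : ∀ k, 0 < L k) {m j : ℕ} (hj : j < L m) :
    concatBlocks B L (blockStart L m + j) = B m j := by
  simp only [concatBlocks, blockIdx_blockStart_add hL hj, Nat.add_sub_cancel_left]

lemma concatBlocks_blockStart_add_of_le (hL : ∀ k, 0 < L k)
    (hjunc : ∀ m, B m (L m) = B (m + 1) 0) {m j : ℕ} (hj : j ≤ L m) :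
    concatBlocks B L (blockStart L m + j) = B m j := by
  rcases hj.lt_or_eq with hj | rfl
  · exact concatBlocks_blockStart_add hL hj
  · rw [← blockStart_succ, ← add_zero (blockStart L (m + 1)),
      concatBlocks_blockStart_add hL (hL _), hjunc]

lemma exists_eq_blockStart_add (hL : ∀ k, 0 < L k) (i : ℕ) :
    ∃ m j, j < L m ∧ i = blockStart L m + j := by
  set m := blockIdx L i
  have hle : blockStart L m ≤ i :=
    Nat.findGreatest_spec (P := fun m => blockStart L m ≤ i) (Nat.zero_le i) (by simp [blockStart])
  have hlt : i < blockStart L (m + 1) := by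
    by_contra! h
    have : m + 1 ≤ blockIdx L i :=
      Nat.le_findGreatest ((blockStart_strictMono hL).le_apply.trans h) h
    omega
  rw [blockStart_succ] at hlt
  exact ⟨m, i - blockStart L m, by omega, by omega⟩

lemma le_of_blockStart_le_add (hL : ∀ k, 0 < L k) {M m j : ℕ} (hj : j < L m)
    (h : blockStart L M ≤ blockStart L m + j) : M ≤ m := by
  by_contra! hmM
  have := (blockStart_strictMono hL).monotone (Nat.succ_le_of_lt hmM)
  rw [blockStart_succ] at this
  omega

lemma tendsto_concatBlocks_atTop {B : ℕ → ℕ → ℝ} (hL : ∀ k, 0 < L k) {b : ℕ → ℝ}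
    (hb : Tendsto b atTop atTop) (hB : ∀ m j, j < L m → b m ≤ B m j) :
    Tendsto (concatBlocks B L) atTop atTop := by
  refine tendsto_atTop.2 fun R => ?_
  obtain ⟨M, hM⟩ := eventually_atTop.1 (tendsto_atTop.1 hb R)
  filter_upwards [eventually_ge_atTop (blockStart L M)] with i hi
  obtain ⟨m, j, hj, rfl⟩ := exists_eq_blockStart_add hL i
  rw [concatBlocks_blockStart_add hL hj]
  exact (hM m (le_of_blockStart_le_add hL hj hi)).trans (hB m j hj)

end ConcatBlocks

lemma isSubseq_comp {X : Type*} {p : ℕ → ℕ} (hp : StrictMono p) (s : ℕ → X) :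
    IsSubseq (s ∘ p) s :=
  ⟨p, hp, fun _ => rfl⟩

lemma union_image_tails_subset {X : Type*} (s t : ℕ → X) {a b : ℕ} (h : a ≤ b) :
    s '' {j | b ≤ j} ∪ t '' {j | b ≤ j} ⊆ s '' {j | a ≤ j} ∪ t '' {j | a ≤ j} :=
  have h' : {j | b ≤ j} ⊆ {j | a ≤ j} := fun _ hj => h.trans hj
  union_subset_union (image_mono h') (image_mono h')

section CoarseSeq

variable {X : Type*} [PseudoMetricSpace X] {ξ : X} {s t u : ℕ → X}

lemma IsCoarseSeqM.comp_add (hs : IsCoarseSeqM ξ s) (a : ℕ) :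
    IsCoarseSeqM ξ (fun i => s (i + a)) := by
  obtain ⟨⟨K, hK⟩, hdiv⟩ := hs
  exact ⟨⟨K, fun i => by simpa [Nat.add_right_comm i 1 a] using hK (i + a)⟩,
    (tendsto_add_atTop_iff_nat a).2 hdiv⟩

lemma isCoarseSeqM_concatBlocks {B : ℕ → ℕ → X} {L : ℕ → ℕ} (hL : ∀ k, 0 < L k)
    (hjunc : ∀ m, B m (L m) = B (m + 1) 0) {K : ℝ}
    (hstep : ∀ m j, j < L m → dist (B m j) (B m (j + 1)) ≤ K) {ρ : ℕ → ℝ}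
    (hρ : Tendsto ρ atTop atTop) (hfar : ∀ m j, j < L m → ρ m ≤ dist ξ (B m j)) :
    IsCoarseSeqM ξ (concatBlocks B L) := by
  refine ⟨⟨K, fun i => ?_⟩, tendsto_concatBlocks_atTop (B := fun m j => dist ξ (B m j)) hL hρ hfar⟩
  obtain ⟨m, j, hj, rfl⟩ := exists_eq_blockStart_add hL i
  rw [concatBlocks_blockStart_add hL hj, add_assoc,
    concatBlocks_blockStart_add_of_le hL hjunc hj]
  exact hstep m j hj

lemma exists_isCoarseSeqM_comp_eq_of_chainM {w : ℕ → X} {K : ℝ} (hK : 0 ≤ K) {ρ : ℕ → ℝ}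
    (hρ : Tendsto ρ atTop atTop) (hw : ∀ k, ChainM K {z | ρ k < dist ξ z} (w k) (w (k + 1))) :
    ∃ u p, IsCoarseSeqM ξ u ∧ StrictMono p ∧ u ∘ p = w := by
  choose n c hc0 hcn hcmem hcstep using hw
  -- block `k` is the chain `c k` with its first point doubled (`0 - 1 = 0`), so it is nonempty
  have hL : ∀ k, 0 < n k + 1 := fun k => Nat.succ_pos _
  refine ⟨concatBlocks (fun k j => c k (j - 1)) (fun k => n k + 1),
    blockStart (fun k => n k + 1), ?_, blockStart_strictMono hL, funext fun k => ?_⟩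
  · refine isCoarseSeqM_concatBlocks (K := K) hL (fun k => by simp [hcn, hc0]) (fun k j hj => ?_) hρ
      (fun k j hj => (hcmem k (j - 1) (by omega)).le)
    rcases j with _ | j
    · simpa using hK
    · exact hcstep k j (by omega)
  · rw [Function.comp_apply, ← add_zero (blockStart _ k), concatBlocks_blockStart_add hL (hL k)]
    exact hc0 k

namespace SigmaRelM

lemma of_isSubseq (hs : IsCoarseSeqM ξ s) (ht : IsCoarseSeqM ξ t) (h : IsSubseq s t) :
    SigmaRelM ξ s t := by
  refine ⟨1, fun i => if i = 0 then s else t, rfl, rfl, fun i _ => ?_, fun i hi => ?_⟩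
  · dsimp only
    split_ifs <;> assumption
  · obtain rfl : i = 0 := by omega
    exact Or.inl h

lemma symm (h : SigmaRelM ξ s t) : SigmaRelM ξ t s := by
  obtain ⟨n, u, rfl, rfl, hu, hlink⟩ := h
  refine ⟨n, fun i => u (n - i), by simp, by simp, fun i _ => hu _ (Nat.sub_le _ _),
    fun i hi => ?_⟩
  have := hlink (n - (i + 1)) (by omega)
  rw [show n - (i + 1) + 1 = n - i by omega] at this
  exact this.symm

lemma trans (h₁ : SigmaRelM ξ s t) (h₂ : SigmaRelM ξ t u) : SigmaRelM ξ s u := by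
  obtain ⟨n, v, rfl, rfl, hv, hvlink⟩ := h₁
  obtain ⟨m, w, hw0, rfl, hw, hwlink⟩ := h₂
  refine ⟨n + m, fun i => if i < n then v i else w (i - n), ?_, by simp, fun i hi => ?_,
    fun i hi => ?_⟩
  · rcases n.eq_zero_or_pos with rfl | hn
    · simp [hw0]
    · simp [hn]
  · dsimp only
    split_ifs with h
    · exact hv i h.le
    · exact hw _ (by omega)
  · dsimp only
    by_cases hi₁ : i + 1 < n
    · simpa [hi₁, show i < n by omega] using hvlink i (by omega)
    by_cases hi₂ : i + 1 = n
    · simpa [hi₁, hi₂, hw0, show i < n by omega] using hvlink i (by omega)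
    · simpa [hi₁, show ¬i < n by omega, show i + 1 - n = i - n + 1 by omega] using
        hwlink (i - n) (by omega)

lemma apply_eq {β : Sort*} {f : CoarseSeqM ξ → β}
    (hf : ∀ s t : CoarseSeqM ξ, IsSubseq s.1 t.1 → f s = f t) {s t : CoarseSeqM ξ}
    (h : SigmaRelM ξ s.1 t.1) : f s = f t := by
  obtain ⟨n, u, hu0, hun, hu, hlink⟩ := h
  have key : ∀ i (hi : i ≤ n), f s = f ⟨u i, hu i hi⟩ := by
    intro i
    induction i with
    | zero => exact fun _ => congrArg f (Subtype.ext hu0.symm)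
    | succ i ih =>
      intro hi
      rw [ih (by omega)]
      rcases hlink i (by omega) with h | h
      exacts [hf _ _ h, (hf _ _ h).symm]
  exact (key n le_rfl).trans (congrArg f (Subtype.ext hun))

end SigmaRelM

lemma EpsRelM.exists_chainM (h : EpsRelM ξ s t) :
    ∃ K > (0 : ℝ), ∃ ρ : ℕ → ℝ, Tendsto ρ atTop atTop ∧ ∃ i₀, ∀ i,
      ∀ x ∈ s '' {j | i + i₀ ≤ j} ∪ t '' {j | i + i₀ ≤ j},
      ∀ y ∈ s '' {j | i + i₀ ≤ j} ∪ t '' {j | i + i₀ ≤ j},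
        ChainM K {z | ρ i < dist ξ z} x y := by
  obtain ⟨K, hK, hE⟩ := h
  choose P hP using fun m : ℕ => hE (m + 1) (by positivity)
  set μ : ℕ → ℕ := fun i => Nat.findGreatest (fun m => P m ≤ i + P 0) (i + P 0)
  have hμ : Tendsto μ atTop atTop := tendsto_atTop.2 fun M => by
    filter_upwards [eventually_ge_atTop (max M (P M))] with i hi
    exact Nat.le_findGreatest (by omega) (by omega)
  refine ⟨K, hK, fun i => μ i + 1,
    tendsto_atTop_add_const_right _ _ (tendsto_natCast_atTop_atTop.comp hμ), P 0,
    fun i x hx y hy => ?_⟩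
  have hPμ : P (μ i) ≤ i + P 0 :=
    Nat.findGreatest_spec (P := fun m => P m ≤ i + P 0) (Nat.zero_le _) (by omega)
  have htail := union_image_tails_subset s t hPμ
  exact hP (μ i) x (htail hx) y (htail hy)

theorem sigmaRelM_of_epsRelM (hs : IsCoarseSeqM ξ s) (ht : IsCoarseSeqM ξ t)
    (h : EpsRelM ξ s t) : SigmaRelM ξ s t := by
  obtain ⟨K, hK, ρ, hρ, i₀, hchain⟩ := h.exists_chainM
  set w : ℕ → X := fun k => if k % 2 = 0 then s (k / 2 + i₀) else t (k / 2 + i₀)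
  have hmem : ∀ k, w k ∈ s '' {j | k / 2 + i₀ ≤ j} ∪ t '' {j | k / 2 + i₀ ≤ j} := fun k => by
    simp only [w]
    split_ifs
    exacts [Or.inl ⟨_, le_refl (k / 2 + i₀), rfl⟩, Or.inr ⟨_, le_refl (k / 2 + i₀), rfl⟩]
  have hw : ∀ k, ChainM K {z | ρ (k / 2) < dist ξ z} (w k) (w (k + 1)) := fun k =>
    hchain _ _ (hmem k) _ (union_image_tails_subset s t (by omega) (hmem (k + 1)))
  obtain ⟨u, p, hu, hp, hup⟩ := exists_isCoarseSeqM_comp_eq_of_chainM hK.le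
    (hρ.comp (Nat.tendsto_div_const_atTop two_ne_zero)) hw
  have hs' : (fun i => s (i + i₀)) = u ∘ (p ∘ fun i => 2 * i) := by
    rw [← Function.comp_assoc, hup]; funext i; simp [w]
  have ht' : (fun i => t (i + i₀)) = u ∘ (p ∘ fun i => 2 * i + 1) := by
    rw [← Function.comp_assoc, hup]; funext i; simp [w, show (2 * i + 1) / 2 = i by omega]
  have hs'u := hs' ▸ isSubseq_comp (hp.comp (strictMono_mul_left_of_pos two_pos)) u
  have ht'u := ht' ▸ isSubseq_comp (hp.comp ((strictMono_mul_left_of_pos two_pos).add_const 1)) u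
  have hshift := fun v : ℕ → X => isSubseq_comp (strictMono_id.add_const i₀) v
  exact (SigmaRelM.of_isSubseq (hs.comp_add i₀) hs (hshift s)).symm.trans <|
    (SigmaRelM.of_isSubseq (hs.comp_add i₀) hu hs'u).trans <|
    (SigmaRelM.of_isSubseq (ht.comp_add i₀) hu ht'u).symm.trans <|
    SigmaRelM.of_isSubseq (ht.comp_add i₀) ht (hshift t)

end CoarseSeq

section Rays

variable {X : Type*} [TopologicalSpace X] {r r₀ r₁ : ℝ≥0 → X}

lemma IsRay.tendsto_cocompact (h : IsRay r) : Tendsto r atTop (cocompact X) := by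
  rw [← cocompact_eq_atTop]
  exact hasBasis_cocompact.tendsto_right_iff.2 fun K hK => (h.2 K hK).compl_mem_cocompact

lemma joinedIn_of_forall_ge (hr : Continuous r) {F : Set X} {T : ℝ≥0} (hF : ∀ t ≥ T, r t ∈ F)
    ⦃u v : ℝ≥0⦄ (hu : T ≤ u) (hv : T ≤ v) : JoinedIn F (r u) (r v) := by
  set tail := (r ∘ Real.toNNReal) '' Ici (T : ℝ)
  have htail : IsPathConnected tail :=
    ((convex_Ici _).isPathConnected nonempty_Ici).image (hr.comp continuous_real_toNNReal)
  have hmem : ∀ w : ℝ≥0, T ≤ w → r w ∈ tail := fun w hw =>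
    ⟨w, NNReal.coe_le_coe.2 hw, by simp⟩
  refine (htail.joinedIn _ (hmem u hu) _ (hmem v hv)).mono ?_
  rintro _ ⟨t, ht, rfl⟩
  exact hF _ (by simpa using Real.toNNReal_mono (mem_Ici.1 ht))

lemma sameEnd_of_forall_exists_eq (h₀ : IsRay r₀) (h₁ : IsRay r₁)
    (h : ∀ T, ∃ p q, T ≤ p ∧ T ≤ q ∧ r₀ p = r₁ q) : SameEnd r₀ r₁ := by
  intro C hC
  obtain ⟨T, hT⟩ := eventually_atTop.1
    ((h₀.tendsto_cocompact.eventually hC.compl_mem_cocompact).and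
      (h₁.tendsto_cocompact.eventually hC.compl_mem_cocompact))
  have j₀ := joinedIn_of_forall_ge h₀.1 (F := Cᶜ) fun t ht => (hT t ht).1
  have j₁ := joinedIn_of_forall_ge h₁.1 (F := Cᶜ) fun t ht => (hT t ht).2
  have hN : T ≤ ⌈T⌉₊ := Nat.le_ceil T
  have key : ∀ x ∈ r₀ '' {t | (⌈T⌉₊ : ℝ≥0) ≤ t} ∪ r₁ '' {t | (⌈T⌉₊ : ℝ≥0) ≤ t},
      JoinedIn Cᶜ x (r₁ ⌈T⌉₊) := by
    rintro _ (⟨u, hu, rfl⟩ | ⟨u, hu, rfl⟩)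
    · obtain ⟨p, q, hp, hq, hpq⟩ := h (max u ⌈T⌉₊)
      refine (j₀ (hN.trans hu) (hN.trans (hu.trans ((le_max_left _ _).trans hp)))).trans ?_
      rw [hpq]
      exact j₁ (hN.trans ((le_max_right _ _).trans hq)) hN
    · exact j₁ (hN.trans hu) hN
  exact ⟨⌈T⌉₊, fun x hx y hy => (key x hx).trans (key y hy).symm⟩

end Rays

section Chains

variable {X : Type*} [PseudoMetricSpace X]

lemma ContinuousOn.exists_partition_dist_lt {f : ℝ → X} {a : ℝ}
    (hf : ContinuousOn f (Icc a (a + 1))) {ε : ℝ} (hε : 0 < ε) :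
    ∃ k : ℕ, 0 < k ∧ ∀ j < k, dist (f (a + j / k)) (f (a + (j + 1 : ℕ) / k)) < ε := by
  obtain ⟨δ, hδ, hfδ⟩ := Metric.uniformContinuousOn_iff.1
    (isCompact_Icc.uniformContinuousOn_of_continuous hf) ε hε
  obtain ⟨k, hk⟩ := exists_nat_gt (1 / δ)
  have hk0 : (0 : ℝ) < k := (one_div_pos.2 hδ).trans hk
  have hmem : ∀ i : ℕ, i ≤ k → a + i / k ∈ Icc a (a + 1) := fun i hi =>
    ⟨le_add_of_nonneg_right (by positivity),
      (add_le_add_iff_left a).2 ((div_le_one hk0).2 (Nat.cast_le.2 hi))⟩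
  refine ⟨k, by exact_mod_cast hk0, fun j hj => hfδ _ (hmem j hj.le) _ (hmem _ hj) ?_⟩
  have : a + j / k - (a + (j + 1 : ℕ) / k) = -(1 / k) := by push_cast; ring
  rw [Real.dist_eq, this, abs_neg, abs_of_pos (by positivity)]
  exact (one_div_lt hδ hk0).1 hk

lemma JoinedIn.chainM {F : Set X} {x y : X} (h : JoinedIn F x y) {K : ℝ} (hK : 0 < K) :
    ChainM K F x y := by
  obtain ⟨γ, hγ⟩ := h
  obtain ⟨k, hk, hstep⟩ := γ.continuous_extend.continuousOn.exists_partition_dist_lt (a := 0) hK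
  exact ⟨k, fun j => γ.extend (0 + j / k), by simp, by simp [hk.ne'],
    fun j _ => hγ _, fun j hj => (hstep j hj).le⟩

lemma IsRay.tendsto_dist [ProperSpace X] {r : ℝ≥0 → X} (h : IsRay r) (ξ : X) :
    Tendsto (fun t => dist ξ (r t)) atTop atTop :=
  (tendsto_dist_left_cocompact_atTop ξ).comp h.tendsto_cocompact

lemma epsRelM_comp_of_sameEnd [ProperSpace X] (ξ : X) {r₀ r₁ : ℝ≥0 → X} (h : SameEnd r₀ r₁)
    {τ₀ τ₁ : ℕ → ℝ≥0} (hτ₀ : Tendsto τ₀ atTop atTop) (hτ₁ : Tendsto τ₁ atTop atTop) :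
    EpsRelM ξ (r₀ ∘ τ₀) (r₁ ∘ τ₁) := by
  refine ⟨1, one_pos, fun R _ => ?_⟩
  obtain ⟨N, hN⟩ := h _ (isCompact_closedBall ξ R)
  obtain ⟨M, hM⟩ := eventually_atTop.1
    ((hτ₀.eventually_ge_atTop N).and (hτ₁.eventually_ge_atTop N))
  have htail : (r₀ ∘ τ₀) '' {i | M ≤ i} ∪ (r₁ ∘ τ₁) '' {i | M ≤ i} ⊆
      r₀ '' {t | (N : ℝ≥0) ≤ t} ∪ r₁ '' {t | (N : ℝ≥0) ≤ t} := by
    rintro _ (⟨i, hi, rfl⟩ | ⟨i, hi, rfl⟩)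
    exacts [Or.inl ⟨_, (hM i hi).1, rfl⟩, Or.inr ⟨_, (hM i hi).2, rfl⟩]
  refine ⟨M, fun x hx y hy => ((hN x (htail hx) y (htail hy)).mono fun z hz => ?_).chainM one_pos⟩
  simpa [dist_comm] using hz

end Chains

lemma continuous_of_continuousOn_Icc_nat {Y : Type*} [TopologicalSpace Y] {f : ℝ≥0 → Y}
    (h : ∀ n : ℕ, ContinuousOn f (Icc n (n + 1))) : Continuous f := by
  refine LocallyFinite.continuous (f := fun n : ℕ => Icc (n : ℝ≥0) (n + 1)) (fun x => ?_)
    (eq_univ_of_forall fun t => mem_iUnion.2 ⟨⌊t⌋₊, Nat.floor_le t.2, (Nat.lt_floor_add_one t).le⟩)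
    (fun _ => isClosed_Icc) h
  exact ⟨Iio (x + 1), Iio_mem_nhds (lt_add_one x), (finite_lt_nat ⌈x + 1⌉₊).subset
    fun n ⟨_, hy, hyx⟩ => Nat.lt_ceil.2 (hy.1.trans_lt hyx)⟩

lemma sub_mul_mem_Icc {n : ℕ} {t : ℝ≥0} (ht : t ∈ Icc (n : ℝ≥0) (n + 1)) {d : ℝ} (hd : 0 ≤ d) :
    ((t : ℝ) - n) * d ∈ Icc 0 d := by
  have h₁ : (n : ℝ) ≤ t := by exact_mod_cast ht.1
  have h₂ : (t : ℝ) ≤ n + 1 := by exact_mod_cast ht.2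
  exact ⟨mul_nonneg (by linarith) hd, mul_le_of_le_one_left hd (by linarith)⟩

namespace IsGeodesicSpace

variable {X : Type*} [MetricSpace X] (hgeo : IsGeodesicSpace X)

noncomputable def geodesic (x y : X) : ℝ → X := (hgeo x y).choose

lemma geodesic_zero (x y : X) : hgeo.geodesic x y 0 = x := (hgeo x y).choose_spec.1

lemma geodesic_dist (x y : X) : hgeo.geodesic x y (dist x y) = y := (hgeo x y).choose_spec.2.1

lemma dist_geodesic {x y : X} {u v : ℝ} (hu : u ∈ Icc 0 (dist x y)) (hv : v ∈ Icc 0 (dist x y)) :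
    dist (hgeo.geodesic x y u) (hgeo.geodesic x y v) = |u - v| :=
  (hgeo x y).choose_spec.2.2 u hu v hv

lemma continuousOn_geodesic (x y : X) : ContinuousOn (hgeo.geodesic x y) (Icc 0 (dist x y)) :=
  (LipschitzOnWith.of_dist_le_mul (K := 1) fun u hu v hv => by
    rw [hgeo.dist_geodesic hu hv, Real.dist_eq]; simp).continuousOn

noncomputable def interpRay (s : ℕ → X) (t : ℝ≥0) : X :=
  hgeo.geodesic (s ⌊t⌋₊) (s (⌊t⌋₊ + 1)) (((t : ℝ) - ⌊t⌋₊) * dist (s ⌊t⌋₊) (s (⌊t⌋₊ + 1)))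

variable {s : ℕ → X}

lemma interpRay_natCast (s : ℕ → X) (n : ℕ) : hgeo.interpRay s n = s n := by
  simp [interpRay, geodesic_zero]

lemma interpRay_eq {n : ℕ} {t : ℝ≥0} (ht : t ∈ Icc (n : ℝ≥0) (n + 1)) :
    hgeo.interpRay s t =
      hgeo.geodesic (s n) (s (n + 1)) (((t : ℝ) - n) * dist (s n) (s (n + 1))) := by
  rcases ht.2.lt_or_eq with hlt | rfl
  · rw [interpRay, (Nat.floor_eq_iff (a := t) zero_le).2 ⟨ht.1, hlt⟩]
  · rw [← Nat.cast_add_one, interpRay_natCast]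
    simp [geodesic_dist]

lemma dist_interpRay_le {n : ℕ} {t : ℝ≥0} (ht : t ∈ Icc (n : ℝ≥0) (n + 1)) :
    dist (s n) (hgeo.interpRay s t) ≤ dist (s n) (s (n + 1)) := by
  have h0 : (0 : ℝ) ∈ Icc 0 (dist (s n) (s (n + 1))) := ⟨le_rfl, dist_nonneg⟩
  have hmem := sub_mul_mem_Icc ht (dist_nonneg (x := s n) (y := s (n + 1)))
  have h := hgeo.dist_geodesic h0 hmem
  rw [geodesic_zero, zero_sub, abs_neg, abs_of_nonneg hmem.1] at h
  rw [interpRay_eq hgeo ht, h]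
  exact hmem.2

lemma continuous_interpRay (s : ℕ → X) : Continuous (hgeo.interpRay s) := by
  refine continuous_of_continuousOn_Icc_nat fun n => ContinuousOn.congr ?_ fun _ ht =>
    interpRay_eq hgeo ht
  refine (hgeo.continuousOn_geodesic _ _).comp (Continuous.continuousOn (by fun_prop))
    fun _ ht => sub_mul_mem_Icc ht dist_nonneg

lemma isRay_interpRay {ξ : X} (hs : IsCoarseSeqM ξ s) : IsRay (hgeo.interpRay s) := by
  obtain ⟨⟨K, hK⟩, hdiv⟩ := hs
  have hfloor : ∀ t : ℝ≥0, dist ξ (s ⌊t⌋₊) + -K ≤ dist ξ (hgeo.interpRay s t) := fun t => by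
    have := hgeo.dist_interpRay_le (s := s) ⟨Nat.floor_le t.2, (Nat.lt_floor_add_one t).le⟩
    linarith [hK ⌊t⌋₊, dist_triangle ξ (hgeo.interpRay s t) (s ⌊t⌋₊),
      dist_comm (s ⌊t⌋₊) (hgeo.interpRay s t)]
  have hdist : Tendsto (fun t => dist ξ (hgeo.interpRay s t)) atTop atTop :=
    tendsto_atTop_mono hfloor
      (tendsto_atTop_add_const_right _ _ (hdiv.comp tendsto_nat_floor_atTop))
  have hproper := isProperMap_iff_tendsto_cocompact.2 ⟨hgeo.continuous_interpRay s, by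
    rw [cocompact_eq_atTop]
    exact tendsto_cocompact_of_tendsto_dist_comp_atTop ξ (by simpa [dist_comm] using hdist)⟩
  exact ⟨hproper.continuous, fun K hK => hproper.isCompact_preimage hK⟩

lemma sameEnd_interpRay_of_isSubseq {ξ : X} {s t : ℕ → X} (hs : IsCoarseSeqM ξ s)
    (ht : IsCoarseSeqM ξ t) (h : IsSubseq s t) :
    SameEnd (hgeo.interpRay s) (hgeo.interpRay t) := by
  obtain ⟨k, hk, hst⟩ := h
  refine sameEnd_of_forall_exists_eq (hgeo.isRay_interpRay hs) (hgeo.isRay_interpRay ht)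
    fun T => ⟨⌈T⌉₊, k ⌈T⌉₊, Nat.le_ceil T, ?_, ?_⟩
  · exact (Nat.le_ceil T).trans (Nat.cast_le.2 hk.le_apply)
  · rw [interpRay_natCast, interpRay_natCast, hst]

end IsGeodesicSpace

section Sampling

variable {X : Type*} [PseudoMetricSpace X] {r : ℝ≥0 → X} (hr : Continuous r)

noncomputable def sampleCount (n : ℕ) : ℕ :=
  ((hr.comp continuous_real_toNNReal).continuousOn.exists_partition_dist_lt
    (a := n) one_pos).choose

lemma sampleCount_spec (n : ℕ) :
    0 < sampleCount hr n ∧ ∀ j < sampleCount hr n,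
      dist (r (n + j / sampleCount hr n : ℝ).toNNReal)
        (r (n + (j + 1 : ℕ) / sampleCount hr n : ℝ).toNNReal) < 1 :=
  ((hr.comp continuous_real_toNNReal).continuousOn.exists_partition_dist_lt
    (a := n) one_pos).choose_spec

lemma sampleCount_pos (n : ℕ) : 0 < sampleCount hr n := (sampleCount_spec hr n).1

noncomputable def sampleTime : ℕ → ℝ :=
  concatBlocks (fun n j => n + j / sampleCount hr n) (sampleCount hr)

noncomputable def sampleSeq (i : ℕ) : X := r (sampleTime hr i).toNNReal

lemma sampleTime_blockStart (n : ℕ) : sampleTime hr (blockStart (sampleCount hr) n) = n := by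
  rw [sampleTime, ← add_zero (blockStart _ n),
    concatBlocks_blockStart_add (sampleCount_pos hr) (sampleCount_pos hr n)]
  simp

lemma tendsto_sampleTime : Tendsto (sampleTime hr) atTop atTop :=
  tendsto_concatBlocks_atTop (sampleCount_pos hr) tendsto_natCast_atTop_atTop
    fun _ _ _ => le_add_of_nonneg_right (by positivity)

lemma dist_sampleSeq_succ_le (i : ℕ) : dist (sampleSeq hr i) (sampleSeq hr (i + 1)) ≤ 1 := by
  have hjunc : ∀ n : ℕ, (n : ℝ) + (sampleCount hr n : ℕ) / (sampleCount hr n : ℕ) =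
      ((n + 1 : ℕ) : ℝ) + ((0 : ℕ) : ℝ) / (sampleCount hr (n + 1) : ℕ) := fun n => by
    rw [div_self (by exact_mod_cast (sampleCount_pos hr n).ne')]; simp
  obtain ⟨n, j, hj, rfl⟩ := exists_eq_blockStart_add (sampleCount_pos hr) i
  rw [sampleSeq, sampleSeq, sampleTime, concatBlocks_blockStart_add (sampleCount_pos hr) hj,
    add_assoc, concatBlocks_blockStart_add_of_le (sampleCount_pos hr) hjunc hj]
  exact ((sampleCount_spec hr n).2 j hj).le

end Sampling

lemma isCoarseSeqM_sampleSeq {X : Type*} [PseudoMetricSpace X] [ProperSpace X] {r : ℝ≥0 → X}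
    (h : IsRay r) (ξ : X) :
    IsCoarseSeqM ξ (sampleSeq h.1) :=
  ⟨⟨1, dist_sampleSeq_succ_le h.1⟩,
    (h.tendsto_dist ξ).comp (Real.tendsto_toNNReal_atTop.comp (tendsto_sampleTime h.1))⟩

namespace IsGeodesicSpace

variable {X : Type*} [MetricSpace X] (hgeo : IsGeodesicSpace X)

lemma isSubseq_sampleSeq_interpRay (s : ℕ → X) :
    IsSubseq s (sampleSeq (hgeo.continuous_interpRay s)) :=
  ⟨blockStart _, blockStart_strictMono (sampleCount_pos _), fun n => by
    rw [sampleSeq, sampleTime_blockStart, Real.toNNReal_natCast, hgeo.interpRay_natCast]⟩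

lemma sameEnd_interpRay_sampleSeq [ProperSpace X] {r : ℝ≥0 → X} (h : IsRay r) (ξ : X) :
    SameEnd (hgeo.interpRay (sampleSeq h.1)) r := by
  refine sameEnd_of_forall_exists_eq
    (hgeo.isRay_interpRay (isCoarseSeqM_sampleSeq h ξ)) h fun T => ?_
  obtain ⟨i, hi⟩ := ((tendsto_natCast_atTop_atTop.eventually_ge_atTop T).and
    ((Real.tendsto_toNNReal_atTop.comp (tendsto_sampleTime h.1)).eventually_ge_atTop T)).exists
  exact ⟨i, _, hi.1, hi.2, hgeo.interpRay_natCast _ i⟩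

end IsGeodesicSpace

/-- for a proper geodesic pointed metric space `(X, ξ)`, there is a
bijection between `Ends X` and `σ(X, ξ)`. -/
theorem ends_equiv_sigmaQuot {X : Type*} [MetricSpace X]
    (hproper : ∀ B : Set X, IsClosed B → Bornology.IsBounded B → IsCompact B)
    (hgeo : IsGeodesicSpace X) (ξ : X) :
    Nonempty (Ends X ≃ SigmaQuotM ξ) := by
  have : ProperSpace X := ⟨fun x r => hproper _ isClosed_closedBall isBounded_closedBall⟩
  let seq : {r : ℝ≥0 → X // IsRay r} → CoarseSeqM ξ := fun r =>
    ⟨sampleSeq r.2.1, isCoarseSeqM_sampleSeq r.2 ξ⟩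
  let ray : CoarseSeqM ξ → {r : ℝ≥0 → X // IsRay r} := fun s =>
    ⟨hgeo.interpRay s.1, hgeo.isRay_interpRay s.2⟩
  have hτ : ∀ r : {r : ℝ≥0 → X // IsRay r},
      Tendsto (fun i => (sampleTime r.2.1 i).toNNReal) atTop atTop := fun r =>
    Real.tendsto_toNNReal_atTop.comp (tendsto_sampleTime r.2.1)
  exact ⟨{
    toFun := Quot.lift (fun r => Quot.mk _ (seq r)) fun r₀ r₁ h =>
      Quot.sound (sigmaRelM_of_epsRelM (seq r₀).2 (seq r₁).2
        (epsRelM_comp_of_sameEnd ξ h (hτ r₀) (hτ r₁)))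
    invFun := Quot.lift (fun s => Quot.mk _ (ray s)) fun _ _ =>
      SigmaRelM.apply_eq (f := fun s => Quot.mk _ (ray s)) fun s t hst =>
        Quot.sound (hgeo.sameEnd_interpRay_of_isSubseq s.2 t.2 hst)
    left_inv := Quot.ind fun r => Quot.sound (hgeo.sameEnd_interpRay_sampleSeq r.2 ξ)
    right_inv := Quot.ind fun s => Quot.sound
      (SigmaRelM.of_isSubseq s.2 (seq (ray s)).2 (hgeo.isSubseq_sampleSeq_interpRay s.1)).symm }⟩
end

section
/- Let T be a finitely branching rooted tree with root the empty sequence, equipped with the tree metric. Then ε(T, root), the set of ε-equivalence classes of coarse sequences in (T, root), is equipotent to [T], the set of infinite branches of T. -/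
open Filter

/-- The length of the longest common prefix of two lists. -/
def commonPrefixLen : List ℕ → List ℕ → ℕ
  | a :: s, b :: t => if a = b then commonPrefixLen s t + 1 else 0
  | _, _ => 0

/-- The tree metric on finite sequences: `d(s,t) = |s| + |t| - 2ℓ` where `ℓ` is the
length of the longest common prefix of `s` and `t`. -/
def treeDist (s t : List ℕ) : ℕ :=
  s.length + t.length - 2 * commonPrefixLen s t

/-- A rooted tree: a set of finite sequences containing the empty sequence and
closed under prefixes. -/
def IsTree (T : Set (List ℕ)) : Prop :=
  [] ∈ T ∧ ∀ l ∈ T, ∀ l' : List ℕ, l' <+: l → l' ∈ T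

/-- A tree is finitely branching if every node has only finitely many one-step
extensions in the tree. -/
def FinitelyBranching (T : Set (List ℕ)) : Prop :=
  ∀ l ∈ T, {n : ℕ | l ++ [n] ∈ T}.Finite

/-- `[T]`: the set of infinite branches of `T`. -/
def Branch (T : Set (List ℕ)) :=
  {f : ℕ → ℕ // ∀ n : ℕ, (List.ofFn fun i : Fin n => f i.1) ∈ T}

/-- A coarse sequence in the pointed metric space `(T, root)`: a sequence of nodes of
`T` with uniformly bounded consecutive steps that diverges from the root to infinity. -/
def IsCoarseSeqT (T : Set (List ℕ)) (s : ℕ → List ℕ) : Prop :=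
  (∀ i : ℕ, s i ∈ T) ∧
  (∃ K : ℝ, ∀ i : ℕ, (treeDist (s i) (s (i + 1)) : ℝ) ≤ K) ∧
  Tendsto (fun i => treeDist [] (s i)) atTop atTop

/-- σ-equivalence of coarse sequences in `(T, root)`. -/
def SigmaRelT (T : Set (List ℕ)) (s t : ℕ → List ℕ) : Prop :=
  ∃ (n : ℕ) (u : ℕ → ℕ → List ℕ), u 0 = s ∧ u n = t ∧ (∀ i ≤ n, IsCoarseSeqT T (u i)) ∧
    ∀ i < n, IsSubseq (u i) (u (i + 1)) ∨ IsSubseq (u (i + 1)) (u i)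

/-- `x` and `y` are connected inside `A` by a finite chain with steps of tree
distance `≤ K`. -/
def ChainT (K : ℝ) (A : Set (List ℕ)) (x y : List ℕ) : Prop :=
  ∃ (n : ℕ) (c : ℕ → List ℕ), c 0 = x ∧ c n = y ∧ (∀ i ≤ n, c i ∈ A) ∧
    ∀ i < n, (treeDist (c i) (c (i + 1)) : ℝ) ≤ K

/-- ε-equivalence of coarse sequences in `(T, root)`: there is `K > 0` such that for
every `r > 0` there is `N` with the tails of `s` and `t` lying in the same
`K`-connected component of `T \ {x : d(root, x) ≤ r}`. -/
def EpsRelT (T : Set (List ℕ)) (s t : ℕ → List ℕ) : Prop :=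
  ∃ K > (0 : ℝ), ∀ r > (0 : ℝ), ∃ N : ℕ,
    ∀ x ∈ (s '' {i | N ≤ i}) ∪ (t '' {i | N ≤ i}),
    ∀ y ∈ (s '' {i | N ≤ i}) ∪ (t '' {i | N ≤ i}),
      ChainT K {l : List ℕ | l ∈ T ∧ r < (treeDist [] l : ℝ)} x y

/-- The set of coarse sequences in `(T, root)`. -/
def CoarseSeqT (T : Set (List ℕ)) := {s : ℕ → List ℕ // IsCoarseSeqT T s}

/-- `σ(T, root)`: the quotient of the set of coarse sequences by σ-equivalence. -/
def SigmaQuotT (T : Set (List ℕ)) :=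
  Quot (fun s t : CoarseSeqT T => SigmaRelT T s.1 t.1)

/-- `ε(T, root)`: the quotient of the set of coarse sequences by ε-equivalence. -/
def EpsQuotT (T : Set (List ℕ)) :=
  Quot (fun s t : CoarseSeqT T => EpsRelT T s.1 t.1)


section EpsAux

lemma cpl_nil_left (y : List ℕ) : commonPrefixLen [] y = 0 := by simp [commonPrefixLen]
lemma cpl_nil_right (x : List ℕ) : commonPrefixLen x [] = 0 := by
  cases x <;> simp [commonPrefixLen]
lemma cpl_cons (a b : ℕ) (s t : List ℕ) :
    commonPrefixLen (a :: s) (b :: t) = if a = b then commonPrefixLen s t + 1 else 0 := rfl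

lemma cpl_le_left : ∀ x y : List ℕ, commonPrefixLen x y ≤ x.length
  | [], y => by simp [cpl_nil_left]
  | a :: s, [] => by simp [cpl_nil_right]
  | a :: s, b :: t => by
    rw [cpl_cons]; split
    · simpa using cpl_le_left s t
    · simp

lemma cpl_comm : ∀ x y : List ℕ, commonPrefixLen x y = commonPrefixLen y x
  | [], y => by simp [cpl_nil_left, cpl_nil_right]
  | a :: s, [] => by simp [cpl_nil_left, cpl_nil_right]
  | a :: s, b :: t => by
    rw [cpl_cons, cpl_cons, cpl_comm s t]
    by_cases h : a = b <;> simp [h, Ne.symm, eq_comm]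

lemma cpl_le_right (x y : List ℕ) : commonPrefixLen x y ≤ y.length := by
  rw [cpl_comm]; exact cpl_le_left y x

lemma take_cpl_eq : ∀ x y : List ℕ, x.take (commonPrefixLen x y) = y.take (commonPrefixLen x y)
  | [], y => by simp [cpl_nil_left]
  | a :: s, [] => by simp [cpl_nil_right]
  | a :: s, b :: t => by
    rw [cpl_cons]; split
    · next h => simp [h, take_cpl_eq s t]
    · simp

lemma le_cpl : ∀ (x y : List ℕ) (m : ℕ), m ≤ x.length → m ≤ y.length →
    x.take m = y.take m → m ≤ commonPrefixLen x y
  | _, _, 0, _, _, _ => Nat.zero_le _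
  | [], _, m + 1, h1, _, _ => by simp at h1
  | a :: s, [], m + 1, _, h2, _ => by simp at h2
  | a :: s, b :: t, m + 1, h1, h2, h => by
    simp only [List.take_succ_cons, List.cons.injEq] at h
    rw [cpl_cons, if_pos h.1]
    have := le_cpl s t m (by simpa using h1) (by simpa using h2) h.2
    omega

lemma take_eq_of_le_cpl {x y : List ℕ} {m : ℕ} (h : m ≤ commonPrefixLen x y) :
    x.take m = y.take m := by
  have h2 := take_cpl_eq x y
  have := congrArg (fun l => List.take m l) h2
  simpa [List.take_take, Nat.min_eq_left h] using this

lemma treeDist_add (x y : List ℕ) :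
    treeDist x y + 2 * commonPrefixLen x y = x.length + y.length := by
  have h1 := cpl_le_left x y; have h2 := cpl_le_right x y
  unfold treeDist; omega

lemma treeDist_comm (x y : List ℕ) : treeDist x y = treeDist y x := by
  unfold treeDist; rw [cpl_comm, Nat.add_comm]

lemma treeDist_nil (x : List ℕ) : treeDist [] x = x.length := by
  unfold treeDist; rw [cpl_nil_left]; simp

lemma treeDist_le_take {x y : List ℕ} {m : ℕ} (h1 : m ≤ x.length) (h2 : m ≤ y.length)
    (h : x.take m = y.take m) : treeDist x y ≤ (x.length - m) + (y.length - m) := by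
  have := le_cpl x y m h1 h2 h
  have := treeDist_add x y
  omega

lemma take_stable {x y : List ℕ} {m R : ℕ} {K : ℝ}
    (hx : R < x.length) (hy : R < y.length) (hm : m ≤ R)
    (hd : (treeDist x y : ℝ) ≤ K) (hK : K < 2 * ((R : ℝ) + 1 - m)) :
    x.take m = y.take m := by
  by_contra hne
  have hcpl : commonPrefixLen x y < m := by
    by_contra h
    exact hne (take_eq_of_le_cpl (by omega))
  have hadd := treeDist_add x y
  have hnat : 2 * (R + 1) ≤ treeDist x y + 2 * m := by omega
  have hcast : (2 : ℝ) * ((R : ℝ) + 1) ≤ (treeDist x y : ℝ) + 2 * m := by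
    exact_mod_cast hnat
  linarith

lemma ChainT.symm {K : ℝ} {A : Set (List ℕ)} {x y : List ℕ} (h : ChainT K A x y) :
    ChainT K A y x := by
  obtain ⟨n, c, h0, hn, hmem, hstep⟩ := h
  refine ⟨n, fun i => c (n - i), by simpa using hn, by simpa using h0,
    fun i hi => hmem _ (by omega), fun i hi => ?_⟩
  dsimp only
  have h1 : n - i = (n - (i + 1)) + 1 := by omega
  rw [treeDist_comm, h1]
  exact hstep _ (by omega)

lemma ChainT.trans {K : ℝ} {A : Set (List ℕ)} {x y z : List ℕ}
    (h1 : ChainT K A x y) (h2 : ChainT K A y z) : ChainT K A x z := by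
  obtain ⟨n1, c1, h10, h1n, h1mem, h1step⟩ := h1
  obtain ⟨n2, c2, h20, h2n, h2mem, h2step⟩ := h2
  refine ⟨n1 + n2, fun i => if i ≤ n1 then c1 i else c2 (i - n1), by simpa, ?_, ?_, ?_⟩
  · dsimp only
    by_cases h : n2 = 0
    · subst h; simp only [Nat.add_zero, if_pos le_rfl, h1n, ← h2n, h20]
    · rw [if_neg (by omega), show n1 + n2 - n1 = n2 from by omega, h2n]
  · intro i hi
    dsimp only
    split
    · exact h1mem _ (by assumption)
    · exact h2mem _ (by omega)
  · intro i hi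
    dsimp only
    rcases lt_or_ge i n1 with h | h
    · rw [if_pos (by omega), if_pos (by omega)]; exact h1step _ h
    · have e1 : ∀ j, n1 ≤ j → (if j ≤ n1 then c1 j else c2 (j - n1)) = c2 (j - n1) := by
        intro j hj
        rcases eq_or_lt_of_le hj with h' | h'
        · rw [if_pos (by omega), ← h', Nat.sub_self, h20, h1n]
        · rw [if_neg (by omega)]
      rw [e1 _ h, e1 _ (by omega), show i + 1 - n1 = (i - n1) + 1 from by omega]
      exact h2step _ (by omega)

lemma chain_down_s14 {T : Set (List ℕ)} (hT : IsTree T) {x : List ℕ} {m : ℕ} {r : ℝ}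
    (hx : x ∈ T) (hm : m ≤ x.length) (hr : r < m) :
    ChainT 1 {l : List ℕ | l ∈ T ∧ r < (treeDist [] l : ℝ)} x (x.take m) := by
  refine ⟨x.length - m, fun i => x.take (x.length - i), by simp, by
    dsimp only; rw [show x.length - (x.length - m) = m from by omega], ?_, ?_⟩
  · intro i hi
    refine ⟨hT.2 x hx _ (List.take_prefix _ _), ?_⟩
    rw [treeDist_nil, List.length_take, Nat.min_eq_left (by omega)]
    calc r < (m : ℝ) := hr
    _ ≤ _ := by exact_mod_cast (by omega : m ≤ x.length - i)
  · intro i hi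
    have key : treeDist (x.take (x.length - i)) (x.take (x.length - (i + 1))) ≤ 1 := by
      have h1 : x.length - (i + 1) ≤ (x.take (x.length - i)).length := by
        simp only [List.length_take]; omega
      have h2 : x.length - (i + 1) ≤ (x.take (x.length - (i + 1))).length := by
        simp only [List.length_take]; omega
      have h3 : (x.take (x.length - i)).take (x.length - (i + 1)) =
          (x.take (x.length - (i + 1))).take (x.length - (i + 1)) := by
        rw [List.take_take, List.take_take]
        congr 1; omega
      have := treeDist_le_take h1 h2 h3
      simp only [List.length_take] at this ⊢
      omega
    exact_mod_cast key

lemma chain_common {T : Set (List ℕ)} (hT : IsTree T) {x y : List ℕ} {m : ℕ} {r : ℝ}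
    (hx : x ∈ T) (hy : y ∈ T) (hmx : m ≤ x.length) (hmy : m ≤ y.length)
    (ht : x.take m = y.take m) (hr : r < m) :
    ChainT 1 {l : List ℕ | l ∈ T ∧ r < (treeDist [] l : ℝ)} x y := by
  refine (chain_down_s14 hT hx hmx hr).trans ?_
  rw [ht]
  exact (chain_down_s14 hT hy hmy hr).symm

lemma take_const_of_chain {T : Set (List ℕ)} {K r : ℝ} {m R : ℕ} {x y : List ℕ}
    (hmR : m ≤ R) (hK : K < 2 * ((R : ℝ) + 1 - m)) (hrR : (R : ℝ) ≤ r)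
    (h : ChainT K {l : List ℕ | l ∈ T ∧ r < (treeDist [] l : ℝ)} x y) :
    x.take m = y.take m := by
  obtain ⟨n, c, h0, hn, hmem, hstep⟩ := h
  have hlen : ∀ i ≤ n, R < (c i).length := by
    intro i hi
    have := (hmem i hi).2
    rw [treeDist_nil] at this
    exact_mod_cast lt_of_le_of_lt hrR this
  have key : ∀ i ≤ n, x.take m = (c i).take m := by
    intro i
    induction i with
    | zero => intro _; rw [h0]
    | succ k ih =>
      intro hk
      rw [ih (by omega)]
      exact take_stable (hlen _ (by omega)) (hlen _ hk) hmR (hstep _ (by omega)) hK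
  rw [key n le_rfl, hn]

/-- The sequence of initial segments of a branch. -/
def prefixSeq (f : ℕ → ℕ) (n : ℕ) : List ℕ := List.ofFn fun i : Fin n => f i.1

lemma prefixSeq_length (f : ℕ → ℕ) (n : ℕ) : (prefixSeq f n).length = n := by
  simp [prefixSeq]

lemma prefixSeq_take (f : ℕ → ℕ) {m n : ℕ} (h : m ≤ n) :
    (prefixSeq f n).take m = prefixSeq f m := by
  apply List.ext_getElem
  · simp [prefixSeq, h]
  · intro i h1 h2
    simp [prefixSeq]

lemma prefixSeq_getD (f : ℕ → ℕ) {j n : ℕ} (h : j < n) :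
    (prefixSeq f n).getD j 0 = f j := by
  rw [List.getD_eq_getElem _ _ (by simp [prefixSeq_length, h])]
  simp [prefixSeq]

lemma prefixSeq_ext {f g : ℕ → ℕ} (h : ∀ m, prefixSeq f m = prefixSeq g m) : f = g := by
  funext j
  have := congrArg (fun l => l.getD j 0) (h (j + 1))
  rwa [prefixSeq_getD f (Nat.lt_succ_self j), prefixSeq_getD g (Nat.lt_succ_self j)] at this

lemma take_concat_getD {l : List ℕ} {n : ℕ} (h : l.length = n + 1) :
    l.take n ++ [l.getD n 0] = l := by
  rw [List.getD_eq_getElem _ _ (by omega)]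
  rw [List.take_concat_get' l n (by omega), List.take_of_length_le (by omega)]

lemma prefixSeq_succ (f : ℕ → ℕ) (n : ℕ) :
    prefixSeq f (n + 1) = prefixSeq f n ++ [f n] := by
  apply List.ext_getElem
  · simp [prefixSeq]
  · intro i h1 h2
    simp only [prefixSeq, List.getElem_ofFn]
    rcases Nat.lt_or_ge i n with h | h
    · rw [List.getElem_append_left (by simp [prefixSeq_length, h])]
      simp [prefixSeq]
    · have hi : i = n := by simp [prefixSeq_length] at h2; omega
      subst hi
      rw [List.getElem_append_right (by simp [prefixSeq])]
      simp [prefixSeq]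

/-- A coarse sequence eventually agrees with the branch `f` at every depth. -/
def AgreesB (s : ℕ → List ℕ) (f : ℕ → ℕ) : Prop :=
  ∀ m, ∃ N, ∀ i, N ≤ i → (s i).take m = prefixSeq f m

lemma agrees_unique {s : ℕ → List ℕ} {f g : ℕ → ℕ} (hf : AgreesB s f) (hg : AgreesB s g) :
    f = g := by
  apply prefixSeq_ext
  intro m
  obtain ⟨N1, h1⟩ := hf m
  obtain ⟨N2, h2⟩ := hg m
  rw [← h1 (max N1 N2) (le_max_left _ _), h2 (max N1 N2) (le_max_right _ _)]

lemma agrees_prefixSeq (f : ℕ → ℕ) : AgreesB (prefixSeq f) f :=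
  fun m => ⟨m, fun _ hi => prefixSeq_take f hi⟩

lemma length_tendsto {T : Set (List ℕ)} {s : ℕ → List ℕ} (hs : IsCoarseSeqT T s) :
    Tendsto (fun i => (s i).length) atTop atTop := by
  have := hs.2.2
  simpa only [treeDist_nil] using this

lemma coarse_prefixSeq {T : Set (List ℕ)} {f : ℕ → ℕ} (hfT : ∀ n, prefixSeq f n ∈ T) :
    IsCoarseSeqT T (prefixSeq f) := by
  refine ⟨hfT, ⟨1, fun i => ?_⟩, ?_⟩
  · have key : treeDist (prefixSeq f i) (prefixSeq f (i + 1)) ≤ 1 := by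
      have h1 : i ≤ (prefixSeq f i).length := by rw [prefixSeq_length]
      have h2 : i ≤ (prefixSeq f (i + 1)).length := by rw [prefixSeq_length]; omega
      have h3 : (prefixSeq f i).take i = (prefixSeq f (i + 1)).take i := by
        rw [prefixSeq_take f (le_refl i), prefixSeq_take f (by omega : i ≤ i + 1)]
      have := treeDist_le_take h1 h2 h3
      rw [prefixSeq_length, prefixSeq_length] at this
      omega
    exact_mod_cast key
  · simp only [treeDist_nil, prefixSeq_length]
    exact tendsto_id

lemma eventual_take {T : Set (List ℕ)} {s : ℕ → List ℕ} (hs : IsCoarseSeqT T s) (m : ℕ) :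
    ∃ N, ∀ i, N ≤ i → (s i).take m = (s N).take m ∧ m ≤ (s i).length := by
  obtain ⟨K, hK⟩ := hs.2.1
  set R := m + ⌈K⌉₊ with hR
  have hKR : K < 2 * ((R : ℝ) + 1 - m) := by
    have h1 := Nat.le_ceil K
    have h2 : (0 : ℝ) ≤ (⌈K⌉₊ : ℝ) := Nat.cast_nonneg _
    rw [hR]
    push_cast
    linarith
  obtain ⟨N, hN⟩ := eventually_atTop.1 ((length_tendsto hs).eventually_gt_atTop R)
  have key : ∀ i, N ≤ i → (s i).take m = (s N).take m := by
    intro i hi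
    induction i, hi using Nat.le_induction with
    | base => rfl
    | succ k hk ih =>
      rw [← take_stable (hN k hk) (hN (k + 1) (by omega)) (by omega) (hK k) hKR, ih]
  exact ⟨N, fun i hi => ⟨key i hi, by have := hN i hi; omega⟩⟩

lemma exists_branch {T : Set (List ℕ)} (hT : IsTree T) {s : ℕ → List ℕ}
    (hs : IsCoarseSeqT T s) :
    ∃ f : ℕ → ℕ, (∀ n, prefixSeq f n ∈ T) ∧ AgreesB s f := by
  choose N hN using fun m => eventual_take hs m
  set L : ℕ → List ℕ := fun m => (s (N m)).take m with hL
  have hLlen : ∀ m, (L m).length = m := by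
    intro m
    have := (hN m (N m) le_rfl).2
    simp only [hL, List.length_take]
    omega
  have hLtake : ∀ m, (L (m + 1)).take m = L m := by
    intro m
    have e1 : (s (max (N m) (N (m + 1)))).take (m + 1) = L (m + 1) :=
      (hN (m + 1) _ (le_max_right _ _)).1
    have e2 : (s (max (N m) (N (m + 1)))).take m = L m :=
      (hN m _ (le_max_left _ _)).1
    rw [← e1, ← e2, List.take_take]
    congr 1
    omega
  set f : ℕ → ℕ := fun m => (L (m + 1)).getD m 0 with hf
  have hPL : ∀ n, prefixSeq f n = L n := by
    intro n
    induction n with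
    | zero => simp [prefixSeq, hL]
    | succ n ih =>
      rw [prefixSeq_succ, ih, ← hLtake n]
      exact take_concat_getD (hLlen (n + 1))
  refine ⟨f, ?_, ?_⟩
  · intro n
    rw [hPL n]
    exact hT.2 _ (hs.1 (N n)) _ (List.take_prefix _ _)
  · intro m
    exact ⟨N m, fun i hi => by rw [(hN m i hi).1, hPL m]⟩

lemma epsRel_symm_s14 {T : Set (List ℕ)} {s t : ℕ → List ℕ} (h : EpsRelT T s t) :
    EpsRelT T t s := by
  obtain ⟨K, hK, h⟩ := h
  refine ⟨K, hK, fun r hr => ?_⟩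
  obtain ⟨N, hN⟩ := h r hr
  exact ⟨N, fun x hx y hy => hN x (by rwa [Set.union_comm]) y (by rwa [Set.union_comm])⟩

lemma eps_of_agrees {T : Set (List ℕ)} (hT : IsTree T) {s : ℕ → List ℕ} {f : ℕ → ℕ}
    (hs : IsCoarseSeqT T s) (hfT : ∀ n, prefixSeq f n ∈ T) (ha : AgreesB s f) :
    EpsRelT T s (prefixSeq f) := by
  refine ⟨1, one_pos, fun r hr => ?_⟩
  set m := ⌈r⌉₊ + 1 with hm
  have hrm : r < (m : ℝ) := by
    calc r ≤ (⌈r⌉₊ : ℝ) := Nat.le_ceil r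
    _ < (m : ℝ) := by rw [hm]; exact_mod_cast Nat.lt_succ_self _
  obtain ⟨N1, h1⟩ := ha m
  obtain ⟨N2, h2⟩ := eventually_atTop.1 ((length_tendsto hs).eventually_ge_atTop m)
  refine ⟨max (max N1 N2) m, ?_⟩
  have key : ∀ z ∈ (s '' {i | max (max N1 N2) m ≤ i}) ∪
      (prefixSeq f '' {i | max (max N1 N2) m ≤ i}),
      z ∈ T ∧ m ≤ z.length ∧ z.take m = prefixSeq f m := by
    rintro z (⟨i, hi, rfl⟩ | ⟨i, hi, rfl⟩)
    · simp only [Set.mem_setOf_eq] at hi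
      exact ⟨hs.1 i, h2 i (by omega : N2 ≤ i), h1 i (by omega : N1 ≤ i)⟩
    · simp only [Set.mem_setOf_eq] at hi
      exact ⟨hfT i, by rw [prefixSeq_length]; omega,
        prefixSeq_take f (by omega : m ≤ i)⟩
  intro x hx y hy
  obtain ⟨hxT, hxm, hxt⟩ := key x hx
  obtain ⟨hyT, hym, hyt⟩ := key y hy
  exact chain_common hT hxT hyT hxm hym (by rw [hxt, hyt]) hrm

lemma agrees_of_eps {T : Set (List ℕ)} {s t : ℕ → List ℕ} {f g : ℕ → ℕ}
    (hst : EpsRelT T s t) (ha : AgreesB s f) (hb : AgreesB t g) : f = g := by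
  apply prefixSeq_ext
  intro m
  obtain ⟨K, hK0, hprop⟩ := hst
  set R := m + ⌈K⌉₊ + 1 with hR
  have hr0 : (0 : ℝ) < (R : ℝ) := by
    rw [hR]; push_cast; positivity
  obtain ⟨N, hN⟩ := hprop (R : ℝ) hr0
  obtain ⟨N1, h1⟩ := ha m
  obtain ⟨N2, h2⟩ := hb m
  set i := max N (max N1 N2) with hi
  have hx : s i ∈ (s '' {j | N ≤ j}) ∪ (t '' {j | N ≤ j}) :=
    Or.inl ⟨i, by simp [hi], rfl⟩
  have hy : t i ∈ (s '' {j | N ≤ j}) ∪ (t '' {j | N ≤ j}) :=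
    Or.inr ⟨i, by simp [hi], rfl⟩
  have hc := hN (s i) hx (t i) hy
  have hKR : K < 2 * ((R : ℝ) + 1 - m) := by
    have := Nat.le_ceil K
    rw [hR]
    push_cast
    linarith
  have heq := take_const_of_chain (by omega : m ≤ R) hKR le_rfl hc
  rw [← h1 i (by omega : N1 ≤ i), heq, h2 i (by omega : N2 ≤ i)]

end EpsAux

/-- for a finitely branching rooted tree `T` with the tree metric,
`ε(T, root)` is equipotent to the set `[T]` of infinite branches of `T`. -/
theorem epsQuot_equiv_branches (T : Set (List ℕ)) (hT : IsTree T)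
    (hfb : FinitelyBranching T) :
    Nonempty (EpsQuotT T ≃ Branch T) := by
  classical
  have P1 : ∀ s : CoarseSeqT T, ∃ f : ℕ → ℕ, (∀ n, prefixSeq f n ∈ T) ∧ AgreesB s.1 f :=
    fun s => exists_branch hT s.2
  choose F hF1 hF2 using P1
  let G : CoarseSeqT T → Branch T := fun s => ⟨F s, fun n => hF1 s n⟩
  have wd : ∀ a b : CoarseSeqT T, EpsRelT T a.1 b.1 → G a = G b :=
    fun a b h => Subtype.ext (agrees_of_eps h (hF2 a) (hF2 b))
  refine ⟨{ toFun := Quot.lift G wd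
            invFun := fun f => Quot.mk _ ⟨prefixSeq f.1, coarse_prefixSeq f.2⟩
            left_inv := ?_
            right_inv := ?_ }⟩
  · apply Quot.ind
    intro s
    apply Quot.sound
    exact epsRel_symm_s14 (eps_of_agrees hT s.2 (hF1 s) (hF2 s))
  · intro f
    apply Subtype.ext
    exact agrees_unique (hF2 ⟨prefixSeq f.1, coarse_prefixSeq f.2⟩) (agrees_prefixSeq f.1)
end
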